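/- arXiv:2406.02484 — 9 statements merged into one kernel-verified Lean document; each statement's English description precedes it below -/
import Mathlib

section
/- In the Artin group A[Ã_n] of affine type Ã_n with standard generators t_0, t_1, ..., t_n, let ρ = t_1 t_2 ⋯ t_n. Then ρ t_i ρ^{-1} = t_{i+1} for all 1 ≤ i ≤ n−1, and ρ² t_n ρ^{-2} = t_1. -/
open FreeGroup in
/-- Defining relations of the Artin group of affine type `Ã n` (`n ≥ 2`):
generators `t i` indexed by `ZMod (n+1)`, braid relations between cyclically
adjacent generators and commuting relations otherwise. -/
def ArtinAffineARels (n : ℕ) : Set (FreeGroup (ZMod (n + 1))) :=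
  {w | ∃ i j : ZMod (n + 1),
    (j = i + 1 ∧ w = of i * of j * of i * (of j * of i * of j)⁻¹) ∨
    (i ≠ j ∧ j ≠ i + 1 ∧ i ≠ j + 1 ∧ w = of i * of j * (of j * of i)⁻¹)}

/-- The Artin group of affine type `Ã n`. -/
def ArtinAffineA (n : ℕ) : Type := PresentedGroup (ArtinAffineARels n)

instance (n : ℕ) : Group (ArtinAffineA n) :=
  inferInstanceAs (Group (PresentedGroup (ArtinAffineARels n)))

/-- The standard generator `t i` of `A[Ã n]`. -/
def tA (n : ℕ) (i : ZMod (n + 1)) : ArtinAffineA n := PresentedGroup.of i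

/-- `ρ = t₁ t₂ ⋯ tₙ` in `A[Ã n]`. -/
def rhoA (n : ℕ) : ArtinAffineA n :=
  ((List.range n).map (fun k => tA n ((k + 1 : ℕ) : ZMod (n + 1)))).prod

/-!
Conjugating `t_i` (`1 ≤ i < n`) through `ρ = t₁ ⋯ tₙ`: `t_i` commutes with `t_{i+2} ⋯ tₙ`, the
braid relation turns `t_i t_{i+1} t_i` into `t_{i+1} t_i t_{i+1}`, and `t_{i+1}` commutes with
`t₁ ⋯ t_{i-1}`, so `ρ t_i = t_{i+1} ρ`. Applied letter by letter this gives
`ρ (t₁ ⋯ t_{n-1}) = (t₂ ⋯ tₙ) ρ`, and then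
`ρ² tₙ = t₁ (t₂ ⋯ tₙ) ρ tₙ = t₁ ρ (t₁ ⋯ t_{n-1}) tₙ = t₁ ρ²`.
-/

namespace ArtinAffineA

variable {n : ℕ}

theorem tA_braid (i : ZMod (n + 1)) :
    tA n i * tA n (i + 1) * tA n i = tA n (i + 1) * tA n i * tA n (i + 1) :=
  PresentedGroup.mk_eq_mk_of_mul_inv_mem ⟨i, i + 1, .inl ⟨rfl, rfl⟩⟩

theorem tA_commute {i j : ZMod (n + 1)} (h₁ : i ≠ j) (h₂ : j ≠ i + 1) (h₃ : i ≠ j + 1) :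
    Commute (tA n i) (tA n j) :=
  PresentedGroup.mk_eq_mk_of_mul_inv_mem ⟨i, j, .inr ⟨h₁, h₂, h₃, rfl⟩⟩

def gen (n k : ℕ) : ArtinAffineA n := tA n k

theorem gen_braid (i : ℕ) :
    gen n i * gen n (i + 1) * gen n i = gen n (i + 1) * gen n i * gen n (i + 1) := by
  simpa only [gen, Nat.cast_succ] using tA_braid (i : ZMod (n + 1))

theorem gen_commute {a b : ℕ} (ha : 1 ≤ a) (hab : a + 2 ≤ b) (hb : b ≤ n) :
    Commute (gen n a) (gen n b) := by
  have hne {x y : ℕ} (hx : x ≤ n) (hy : y ≤ n) (hxy : x ≠ y) : (x : ZMod (n + 1)) ≠ y :=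
    (CharP.natCast_injOn_Iio (ZMod (n + 1)) (n + 1)).ne (Nat.lt_succ_of_le hx)
      (Nat.lt_succ_of_le hy) hxy
  refine tA_commute (hne (by omega) hb (by omega)) ?_ ?_
  · rw [← Nat.cast_succ]; exact hne hb (by omega) (by omega)
  -- `b + 1` wraps around to `0` when `b = n`, so compare `a - 1` with `b` instead.
  · rw [← Nat.sub_add_cancel ha, Nat.cast_succ]
    exact fun h => hne (by omega) hb (by omega) (add_right_cancel h)

def ascProd (n a b : ℕ) : ArtinAffineA n := ((List.range' a b).map (gen n)).prod

theorem ascProd_succ (a b : ℕ) : ascProd n a (b + 1) = gen n a * ascProd n (a + 1) b := by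
  simp [ascProd, List.range'_succ]

theorem ascProd_add (a b c : ℕ) :
    ascProd n a (b + c) = ascProd n a b * ascProd n (a + b) c := by
  rw [ascProd, ← List.range'_append, List.map_append, List.prod_append, one_mul]; rfl

theorem ascProd_one (a : ℕ) : ascProd n a 1 = gen n a := by
  simp [ascProd]

theorem commute_ascProd {x : ArtinAffineA n} {a b : ℕ}
    (h : ∀ k, a ≤ k → k < a + b → Commute x (gen n k)) : Commute x (ascProd n a b) :=
  Commute.list_prod_right _ _ <| by
    simp only [List.mem_map, List.mem_range'_1]
    rintro _ ⟨k, hk, rfl⟩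
    exact h k hk.1 hk.2

theorem rhoA_eq_ascProd : rhoA n = ascProd n 1 n := by
  simp only [rhoA, ascProd, List.range'_eq_map_range, List.map_map, Function.comp_def, gen,
    Nat.add_comm 1]

theorem semiconjBy_rhoA_gen {i : ℕ} (hi : 1 ≤ i) (hin : i + 1 ≤ n) :
    SemiconjBy (rhoA n) (gen n i) (gen n (i + 1)) := by
  obtain ⟨j, rfl⟩ : ∃ j, i = j + 1 := ⟨i - 1, by omega⟩
  obtain ⟨r, rfl⟩ : ∃ r, n = j + (r + 1 + 1) := ⟨n - j - 2, by omega⟩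
  set L := ascProd (j + (r + 1 + 1)) 1 j
  set R := ascProd (j + (r + 1 + 1)) (j + 1 + 1 + 1) r
  have hsplit : rhoA (j + (r + 1 + 1)) = L * (gen _ (j + 1) * (gen _ (j + 1 + 1) * R)) := by
    rw [rhoA_eq_ascProd, ascProd_add, ascProd_succ, ascProd_succ, Nat.add_comm 1 j]
  have hR : Commute (gen _ (j + 1)) R :=
    commute_ascProd fun k hk hk' => gen_commute (by omega) (by omega) (by omega)
  have hL : Commute (gen _ (j + 1 + 1)) L :=
    commute_ascProd fun k hk hk' => (gen_commute hk (by omega) (by omega)).symm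
  calc rhoA _ * gen _ (j + 1)
      = L * (gen _ (j + 1) * gen _ (j + 1 + 1) * gen _ (j + 1)) * R := by
        rw [hsplit]; simp only [mul_assoc]; rw [hR.eq]
    _ = L * (gen _ (j + 1 + 1) * gen _ (j + 1) * gen _ (j + 1 + 1)) * R := by rw [gen_braid]
    _ = gen _ (j + 1 + 1) * rhoA _ := by
        rw [hsplit, ← mul_assoc (gen _ (j + 1 + 1)) L, hL.eq]; simp only [mul_assoc]

theorem semiconjBy_rhoA_ascProd {a b : ℕ} (ha : 1 ≤ a) (hab : a + b ≤ n) :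
    SemiconjBy (rhoA n) (ascProd n a b) (ascProd n (a + 1) b) := by
  induction b generalizing a with
  | zero => exact SemiconjBy.one_right _
  | succ b ih =>
    rw [ascProd_succ, ascProd_succ]
    exact (semiconjBy_rhoA_gen ha (by omega)).mul_right (ih (by omega) (by omega))

theorem semiconjBy_rhoA_sq_gen (hn : 1 ≤ n) :
    SemiconjBy (rhoA n ^ 2) (gen n n) (gen n 1) := by
  obtain ⟨m, rfl⟩ : ∃ m, n = m + 1 := ⟨n - 1, by omega⟩
  have hfirst : rhoA (m + 1) = gen _ 1 * ascProd _ 2 m := by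
    rw [rhoA_eq_ascProd, ascProd_succ]
  have hlast : rhoA (m + 1) = ascProd _ 1 m * gen _ (m + 1) := by
    rw [rhoA_eq_ascProd, ascProd_add, ascProd_one, Nat.add_comm]
  have hconj := semiconjBy_rhoA_ascProd (n := m + 1) (b := m) le_rfl (by omega)
  calc rhoA _ ^ 2 * gen _ (m + 1)
      = gen _ 1 * (ascProd _ 2 m * rhoA _) * gen _ (m + 1) := by
        rw [pow_two, hfirst]; simp only [mul_assoc]
    _ = gen _ 1 * rhoA _ ^ 2 := by
        rw [← hconj.eq, pow_two, hlast]; simp only [mul_assoc]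

end ArtinAffineA

/-- `ρ t_i ρ⁻¹ = t_{i+1}` for `1 ≤ i ≤ n-1`, and `ρ² tₙ ρ⁻² = t₁`. -/
theorem stmt0 (n : ℕ) (hn : 2 ≤ n) :
    (∀ i : ℕ, 1 ≤ i → i ≤ n - 1 →
      rhoA n * tA n (i : ZMod (n + 1)) * (rhoA n)⁻¹ = tA n ((i + 1 : ℕ) : ZMod (n + 1))) ∧
    rhoA n ^ 2 * tA n ((n : ℕ) : ZMod (n + 1)) * (rhoA n ^ 2)⁻¹ =
      tA n ((1 : ℕ) : ZMod (n + 1)) := by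
  refine ⟨fun i hi hin => ?_, ?_⟩
  · exact mul_inv_eq_of_eq_mul (ArtinAffineA.semiconjBy_rhoA_gen hi (by omega)).eq
  · exact mul_inv_eq_of_eq_mul (ArtinAffineA.semiconjBy_rhoA_sq_gen (by omega)).eq
end

section
/- In the Artin group A[Ã_n], let ρ' = t_1^{-1} t_2^{-1} ⋯ t_n^{-1}. Then ρ' t_i ρ'^{-1} = t_{i+1} for all 1 ≤ i ≤ n−1, and ρ'² t_n ρ'^{-2} = t_1. -/
/-- `ρ' = t₁⁻¹ t₂⁻¹ ⋯ tₙ⁻¹` in `A[Ã n]`. -/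
def rhoA' (n : ℕ) : ArtinAffineA n :=
  ((List.range n).map (fun k => (tA n ((k + 1 : ℕ) : ZMod (n + 1)))⁻¹)).prod

namespace Stmt1Aux

variable {n : ℕ}

lemma rel_one {r : FreeGroup (ZMod (n+1))} (h : r ∈ ArtinAffineARels n) :
    (PresentedGroup.mk (ArtinAffineARels n) r : ArtinAffineA n) = 1 := by
  change (QuotientGroup.mk r : PresentedGroup (ArtinAffineARels n)) = 1
  rw [QuotientGroup.eq_one_iff]
  exact Subgroup.subset_normalClosure h

lemma braidZ (i : ZMod (n+1)) :
    tA n i * tA n (i+1) * tA n i = tA n (i+1) * tA n i * tA n (i+1) := by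
  have h := rel_one (r := FreeGroup.of i * FreeGroup.of (i+1) * FreeGroup.of i *
      (FreeGroup.of (i+1) * FreeGroup.of i * FreeGroup.of (i+1))⁻¹)
    ⟨i, i+1, Or.inl ⟨rfl, rfl⟩⟩
  simp only [map_mul, map_inv] at h
  rw [mul_inv_eq_one] at h
  exact h

lemma commZ (i j : ZMod (n+1)) (h1 : i ≠ j) (h2 : j ≠ i + 1) (h3 : i ≠ j + 1) :
    Commute (tA n i) (tA n j) := by
  have h := rel_one (r := FreeGroup.of i * FreeGroup.of j * (FreeGroup.of j * FreeGroup.of i)⁻¹)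
    ⟨i, j, Or.inr ⟨h1, h2, h3, rfl⟩⟩
  simp only [map_mul, map_inv] at h
  rw [mul_inv_eq_one] at h
  exact h

/-- generator with natural index -/
def τ (n k : ℕ) : ArtinAffineA n := tA n (k : ZMod (n+1))

lemma braidN (a : ℕ) : τ n a * τ n (a+1) * τ n a = τ n (a+1) * τ n a * τ n (a+1) := by
  have := braidZ (n := n) (a : ZMod (n+1))
  simpa [τ, Nat.cast_add, Nat.cast_one] using this

lemma commN {a b : ℕ} (ha : 1 ≤ a) (hab : a + 2 ≤ b) (hb : b ≤ n) :
    Commute (τ n a) (τ n b) := by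
  apply commZ
  · intro H
    have h2 : a % (n+1) = b % (n+1) := (ZMod.natCast_eq_natCast_iff _ _ _).1 H
    rw [Nat.mod_eq_of_lt (by omega), Nat.mod_eq_of_lt (by omega)] at h2
    omega
  · intro H
    rw [show ((a : ZMod (n+1)) + 1) = ((a+1 : ℕ) : ZMod (n+1)) by push_cast; ring] at H
    have h2 : b % (n+1) = (a+1) % (n+1) := (ZMod.natCast_eq_natCast_iff _ _ _).1 H
    rw [Nat.mod_eq_of_lt (by omega), Nat.mod_eq_of_lt (by omega)] at h2
    omega
  · intro H
    rw [show ((b : ZMod (n+1)) + 1) = ((b+1 : ℕ) : ZMod (n+1)) by push_cast; ring] at H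
    have h2 : a % (n+1) = (b+1) % (n+1) := (ZMod.natCast_eq_natCast_iff _ _ _).1 H
    rcases Nat.lt_or_ge (b+1) (n+1) with hlt | hge
    · rw [Nat.mod_eq_of_lt (by omega), Nat.mod_eq_of_lt hlt] at h2
      omega
    · rw [Nat.mod_eq_of_lt (by omega), show b + 1 = n + 1 by omega, Nat.mod_self] at h2
      omega

lemma braid_conj (a b : ℕ) (h : τ n a * τ n b * τ n a = τ n b * τ n a * τ n b) :
    (τ n a)⁻¹ * (τ n b)⁻¹ * τ n a = τ n b * (τ n a)⁻¹ * (τ n b)⁻¹ := by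
  set x := τ n a; set y := τ n b
  have h3 : y⁻¹ * x * y = x * y * x⁻¹ := by
    have h2 : y⁻¹ * (x * y * x) * x⁻¹ = y⁻¹ * (y * x * y) * x⁻¹ := by rw [h]
    calc y⁻¹ * x * y = y⁻¹ * (x * y * x) * x⁻¹ := by group
      _ = y⁻¹ * (y * x * y) * x⁻¹ := h2
      _ = x * y * x⁻¹ := by group
  calc x⁻¹ * y⁻¹ * x = x⁻¹ * (y⁻¹ * x * y) * y⁻¹ := by group
    _ = x⁻¹ * (x * y * x⁻¹) * y⁻¹ := by rw [h3]
    _ = y * x⁻¹ * y⁻¹ := by group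

/-- ascending product of inverses `t_a⁻¹ t_{a+1}⁻¹ ⋯ t_{a+len-1}⁻¹` -/
def ascL (n a len : ℕ) : ArtinAffineA n :=
  ((List.range' a len).map (fun k => (τ n k)⁻¹)).prod

lemma ascL_zero (a : ℕ) : ascL n a 0 = 1 := rfl

lemma ascL_succ (a len : ℕ) : ascL n a (len+1) = (τ n a)⁻¹ * ascL n (a+1) len := by
  simp [ascL, List.range'_succ]

lemma ascL_one (a : ℕ) : ascL n a 1 = (τ n a)⁻¹ := by
  simp [ascL, List.range'_succ]

lemma ascL_append (l1 : ℕ) : ∀ (a l2 : ℕ),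
    ascL n a (l1 + l2) = ascL n a l1 * ascL n (a + l1) l2 := by
  induction l1 with
  | zero => intro a l2; simp [ascL_zero]
  | succ m ih =>
    intro a l2
    rw [show m + 1 + l2 = (m + l2) + 1 by ring, ascL_succ, ih, ascL_succ, mul_assoc,
      show a + 1 + m = a + (m + 1) by ring]

lemma rho_eq : rhoA' n = ascL n 1 n := by
  rw [rhoA', ascL, List.range'_eq_map_range, List.map_map]
  congr 1
  apply List.map_congr_left
  intro k _
  simp [τ, Nat.add_comm]

lemma commute_ascL {x : ArtinAffineA n} {a len : ℕ}
    (h : ∀ j, a ≤ j → j < a + len → Commute x (τ n j)) :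
    Commute x (ascL n a len) := by
  apply Commute.list_prod_right
  intro y hy
  obtain ⟨k, hk, rfl⟩ := List.mem_map.1 hy
  rw [List.mem_range'] at hk
  obtain ⟨i, hi, rfl⟩ := hk
  exact (h (a + 1 * i) (by omega) (by omega)).inv_right

lemma assemble {G : Type*} [Group G] (A B x y : G)
    (hb : x⁻¹ * y⁻¹ * x = y * x⁻¹ * y⁻¹) (hx : Commute x B) (hy : Commute y A) :
    A * (x⁻¹ * (y⁻¹ * B)) * x = y * (A * (x⁻¹ * (y⁻¹ * B))) := by
  calc A * (x⁻¹ * (y⁻¹ * B)) * x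
      = A * (x⁻¹ * y⁻¹ * (B * x)) := by group
    _ = A * (x⁻¹ * y⁻¹ * (x * B)) := by rw [← hx.eq]
    _ = A * ((x⁻¹ * y⁻¹ * x) * B) := by group
    _ = A * ((y * x⁻¹ * y⁻¹) * B) := by rw [hb]
    _ = A * y * (x⁻¹ * (y⁻¹ * B)) := by group
    _ = y * A * (x⁻¹ * (y⁻¹ * B)) := by rw [← hy.eq]
    _ = y * (A * (x⁻¹ * (y⁻¹ * B))) := by group

lemma conjStep {i : ℕ} (h1 : 1 ≤ i) (h2 : i + 1 ≤ n) :
    rhoA' n * τ n i = τ n (i+1) * rhoA' n := by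
  obtain ⟨a, rfl⟩ : ∃ a, i = a + 1 := ⟨i - 1, by omega⟩
  obtain ⟨c, rfl⟩ : ∃ c, n = a + 2 + c := ⟨n - (a + 2), by omega⟩
  set m := a + 2 + c with hm
  have hrho : rhoA' m = ascL m 1 a * ((τ m (a+1))⁻¹ * ((τ m (a+2))⁻¹ * ascL m (a+3) c)) := by
    rw [rho_eq]
    calc ascL m 1 m = ascL m 1 (a + (1 + (1 + c))) := by rw [show a + (1+(1+c)) = m by omega]
      _ = ascL m 1 a * ascL m (1 + a) (1 + (1 + c)) := ascL_append a 1 (1+(1+c))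
      _ = ascL m 1 a * ((τ m (a+1))⁻¹ * ((τ m (a+2))⁻¹ * ascL m (a+3) c)) := by
          rw [show 1 + a = a + 1 by omega, show 1 + (1 + c) = (1 + c) + 1 by omega, ascL_succ,
            show 1 + c = c + 1 by omega, ascL_succ,
            show a + 1 + 1 = a + 2 by omega, show a + 1 + 1 + 1 = a + 3 by omega]
  rw [hrho]
  apply assemble
  · exact braid_conj (a+1) (a+2) (braidN (n := m) (a+1))
  · exact (commute_ascL fun j hj1 hj2 => commN (by omega) (by omega) (by omega))
  · exact (commute_ascL fun j hj1 hj2 =>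
      (commN (n := m) (a := j) (b := a+2) (by omega) (by omega) (by omega)).symm).symm.symm

lemma shift (len : ℕ) : ∀ a, 1 ≤ a → a + len ≤ n →
    rhoA' n * ascL n a len = ascL n (a+1) len * rhoA' n := by
  induction len with
  | zero => intro a _ _; rw [ascL_zero, ascL_zero, mul_one, one_mul]
  | succ l ih =>
    intro a ha hle
    have step : rhoA' n * (τ n a)⁻¹ = (τ n (a+1))⁻¹ * rhoA' n := by
      have := conjStep (n := n) (i := a) ha (by omega)
      calc rhoA' n * (τ n a)⁻¹ = (τ n (a+1))⁻¹ * (τ n (a+1) * rhoA' n) * (τ n a)⁻¹ := by group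
        _ = (τ n (a+1))⁻¹ * (rhoA' n * τ n a) * (τ n a)⁻¹ := by rw [← this]
        _ = (τ n (a+1))⁻¹ * rhoA' n := by group
    rw [ascL_succ, ascL_succ, ← mul_assoc, step, mul_assoc, ih (a+1) (by omega) (by omega),
      ← mul_assoc, show a + 1 + 1 = a + 2 by omega]

end Stmt1Aux

open Stmt1Aux in
/-- `ρ' t_i ρ'⁻¹ = t_{i+1}` for `1 ≤ i ≤ n-1`, and `ρ'² tₙ ρ'⁻² = t₁`. -/
theorem stmt1 (n : ℕ) (hn : 2 ≤ n) :
    (∀ i : ℕ, 1 ≤ i → i ≤ n - 1 →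
      rhoA' n * tA n (i : ZMod (n + 1)) * (rhoA' n)⁻¹ = tA n ((i + 1 : ℕ) : ZMod (n + 1))) ∧
    rhoA' n ^ 2 * tA n ((n : ℕ) : ZMod (n + 1)) * (rhoA' n ^ 2)⁻¹ =
      tA n ((1 : ℕ) : ZMod (n + 1)) := by
  have part1 : ∀ i : ℕ, 1 ≤ i → i ≤ n - 1 →
      rhoA' n * tA n (i : ZMod (n + 1)) * (rhoA' n)⁻¹ = tA n ((i + 1 : ℕ) : ZMod (n + 1)) := by
    intro i h1 h2
    have := conjStep (n := n) (i := i) h1 (by omega)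
    rw [mul_inv_eq_iff_eq_mul]
    exact this
  refine ⟨part1, ?_⟩
  obtain ⟨p, rfl⟩ : ∃ p, n = p + 2 := ⟨n - 2, by omega⟩
  set n := p + 2 with hn2
  have hpeel : rhoA' n = ascL n 1 (p+1) * (τ n n)⁻¹ := by
    rw [rho_eq, show (n:ℕ) = (p+1) + 1 by omega, ascL_append (p+1) 1 1,
      show 1 + (p+1) = n by omega, ascL_one]
  have hCn : rhoA' n * τ n n = ascL n 1 (p+1) := by
    rw [hpeel]; group
  have hshift : rhoA' n * ascL n 1 (p+1) = ascL n 2 (p+1) * rhoA' n :=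
    shift (p+1) 1 le_rfl (by omega)
  have hsplit : rhoA' n = (τ n 1)⁻¹ * ascL n 2 (p+1) := by
    rw [rho_eq, show (n:ℕ) = (p+1) + 1 by omega, ascL_succ, show (1:ℕ)+1 = 2 by omega]
  have key : rhoA' n * (rhoA' n * τ n n) = τ n 1 * (rhoA' n * rhoA' n) := by
    rw [hCn, hshift]
    calc ascL n 2 (p+1) * rhoA' n = (τ n 1 * ((τ n 1)⁻¹ * ascL n 2 (p+1))) * rhoA' n := by group
      _ = τ n 1 * (rhoA' n * rhoA' n) := by rw [← hsplit]; group
  show rhoA' n ^ 2 * τ n n * (rhoA' n ^ 2)⁻¹ = τ n 1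
  rw [mul_inv_eq_iff_eq_mul, pow_two]
  calc rhoA' n * rhoA' n * τ n n = rhoA' n * (rhoA' n * τ n n) := by group
    _ = τ n 1 * (rhoA' n * rhoA' n) := key
end

section
/- In the Artin group A[B_{n+1}] of type B_{n+1} with standard generators r_1, ..., r_{n+1}, the element ρ_B = r_1 r_2 ⋯ r_n r_{n+1} satisfies ρ_B r_i ρ_B^{-1} = r_{i+1} for all 1 ≤ i ≤ n−1, and ρ_B² r_n ρ_B^{-2} = r_1. -/
open FreeGroup in
/-- Defining relations of the Artin group of type `B m`: generators indexed by
`Fin m` (index `k` represents `r (k+1)`), with an order-4 braid relation between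
the last two generators. -/
def ArtinBRels (m : ℕ) : Set (FreeGroup (Fin m)) :=
  {w | ∃ i j : Fin m,
    ((j : ℕ) = (i : ℕ) + 1 ∧ (j : ℕ) + 1 < m ∧
      w = of i * of j * of i * (of j * of i * of j)⁻¹) ∨
    ((j : ℕ) = (i : ℕ) + 1 ∧ (j : ℕ) + 1 = m ∧
      w = of i * of j * of i * of j * (of j * of i * of j * of i)⁻¹) ∨
    ((i : ℕ) + 1 < (j : ℕ) ∧ w = of i * of j * (of j * of i)⁻¹)}

/-- The Artin group of type `B m`. -/
def ArtinB (m : ℕ) : Type := PresentedGroup (ArtinBRels m)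

instance (m : ℕ) : Group (ArtinB m) :=
  inferInstanceAs (Group (PresentedGroup (ArtinBRels m)))

/-- The standard generator `r i` (1-based, so `1 ≤ i ≤ m`) of `A[B m]`. -/
def rB (m : ℕ) (i : ℕ) : ArtinB m :=
  if h : i - 1 < m then PresentedGroup.of ⟨i - 1, h⟩ else 1

/-- `ρ_B = r₁ r₂ ⋯ r_{n+1}` in `A[B (n+1)]`. -/
def rhoB (n : ℕ) : ArtinB (n + 1) :=
  ((List.range (n + 1)).map (fun k => rB (n + 1) (k + 1))).prod

/-! Write `ρ = r₁ ⋯ r_{n+1}`. In `ρ r_i` every factor except `r_i r_{i+1}` commutes with `r_i`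
or with `r_{i+1}`, and the braid relation reads `(r_i r_{i+1}) r_i = r_{i+1} (r_i r_{i+1})`; so
`ρ r_i = r_{i+1} ρ`. For the last step split `ρ = A r_n r_{n+1}` with `A = r₁ ⋯ r_{n-1}`:
the shift gives `ρ A = A' ρ` with `A' = r₂ ⋯ r_n`, and the order-four relation gives
`ρ r_n r_{n+1} = r_{n+1} ρ r_n`. Hence `ρ² = A' r_{n+1} ρ r_n = r₁⁻¹ ρ² r_n`. -/

namespace ArtinB

variable {m : ℕ}

lemma rB_eq_of {i : ℕ} (h : i - 1 < m) : rB m i = PresentedGroup.of (⟨i - 1, h⟩ : Fin m) :=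
  dif_pos h

lemma rB_eq_one {i : ℕ} (h : m < i) : rB m i = 1 :=
  dif_neg (by omega)

lemma rB_commute {i j : ℕ} (hi : 1 ≤ i) (hij : i + 1 < j) : Commute (rB m i) (rB m j) := by
  rcases lt_or_ge m j with hj | hj
  · rw [rB_eq_one hj]
    exact Commute.one_right _
  rw [rB_eq_of (i := i) (by omega), rB_eq_of (i := j) (by omega)]
  exact PresentedGroup.mk_eq_mk_of_mul_inv_mem ⟨_, _, Or.inr (Or.inr ⟨by simp; omega, rfl⟩)⟩

lemma rB_braid {i : ℕ} (hi : 1 ≤ i) (h : i + 1 < m) :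
    rB m i * rB m (i + 1) * rB m i = rB m (i + 1) * rB m i * rB m (i + 1) := by
  rw [rB_eq_of (i := i) (by omega), rB_eq_of (i := i + 1) (by omega)]
  exact PresentedGroup.mk_eq_mk_of_mul_inv_mem
    ⟨_, _, Or.inl ⟨by simp; omega, by simp; omega, rfl⟩⟩

lemma rB_braid_four {i : ℕ} (hi : 1 ≤ i) (h : i + 1 = m) :
    rB m i * rB m (i + 1) * rB m i * rB m (i + 1)
      = rB m (i + 1) * rB m i * rB m (i + 1) * rB m i := by
  rw [rB_eq_of (i := i) (by omega), rB_eq_of (i := i + 1) (by omega)]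
  exact PresentedGroup.mk_eq_mk_of_mul_inv_mem
    ⟨_, _, Or.inr (Or.inl ⟨by simp; omega, by simp; omega, rfl⟩)⟩

lemma semiconjBy_rB_mul_rB {i : ℕ} (hi : 1 ≤ i) (h : i + 1 < m) :
    SemiconjBy (rB m i * rB m (i + 1)) (rB m i) (rB m (i + 1)) :=
  (rB_braid hi h).trans (mul_assoc _ _ _)

-- `k + a` rather than `a + k`, so that `rhoB n` is definitionally `rBProd (n + 1) 1 (n + 1)`.
def rBProd (m a len : ℕ) : ArtinB m :=
  ((List.range len).map fun k => rB m (k + a)).prod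

lemma rBProd_zero (a : ℕ) : rBProd m a 0 = 1 := rfl

lemma rBProd_add (a p q : ℕ) : rBProd m a (p + q) = rBProd m a p * rBProd m (a + p) q := by
  simp only [rBProd, List.range_add, List.map_append, List.prod_append, List.map_map]
  congr 3
  funext k
  simp only [Function.comp_apply]
  congr 1
  omega

lemma rBProd_one (a : ℕ) : rBProd m a 1 = rB m a := by
  simp [rBProd]

lemma rBProd_succ (a len : ℕ) : rBProd m a (len + 1) = rBProd m a len * rB m (a + len) := by
  rw [rBProd_add, rBProd_one]

lemma rBProd_succ' (a len : ℕ) : rBProd m a (len + 1) = rB m a * rBProd m (a + 1) len := by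
  rw [Nat.add_comm, rBProd_add, rBProd_one]

lemma rBProd_add_two (a p q : ℕ) : rBProd m a (p + (q + 2)) =
    rBProd m a p * (rB m (a + p) * rB m (a + p + 1) * rBProd m (a + p + 2) q) := by
  rw [rBProd_add, Nat.add_comm q 2, rBProd_add (a + p) 2 q, rBProd_succ, rBProd_one]

lemma commute_rB_rBProd_of_lt {i a : ℕ} (len : ℕ) (hi : 1 ≤ i) (h : i + 1 < a) :
    Commute (rB m i) (rBProd m a len) :=
  Commute.list_prod_right _ _ <| by
    simp only [List.mem_map, List.mem_range]
    rintro _ ⟨k, -, rfl⟩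
    exact rB_commute hi (by omega)

lemma commute_rB_rBProd_of_gt {i a len : ℕ} (ha : 1 ≤ a) (h : a + len < i) :
    Commute (rB m i) (rBProd m a len) :=
  Commute.list_prod_right _ _ <| by
    simp only [List.mem_map, List.mem_range]
    rintro _ ⟨k, hk, rfl⟩
    exact (rB_commute (by omega) (by omega)).symm

lemma rhoB_eq_rBProd (n : ℕ) : rhoB n = rBProd (n + 1) 1 (n + 1) := rfl

variable {n : ℕ}

lemma semiconjBy_rhoB_rB {i : ℕ} (hi : 1 ≤ i) (hin : i + 1 ≤ n) :
    SemiconjBy (rhoB n) (rB (n + 1) i) (rB (n + 1) (i + 1)) := by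
  have hsplit := rBProd_add_two (m := n + 1) 1 (i - 1) (n - i)
  rw [show i - 1 + (n - i + 2) = n + 1 by omega, show 1 + (i - 1) = i by omega,
    ← rhoB_eq_rBProd] at hsplit
  rw [hsplit]
  exact SemiconjBy.mul_left
    (commute_rB_rBProd_of_gt (i := i + 1) (a := 1) (len := i - 1) le_rfl (by omega)).symm
    (SemiconjBy.mul_left (semiconjBy_rB_mul_rB hi (by omega))
      (commute_rB_rBProd_of_lt (a := i + 2) (n - i) hi (by omega)).symm)

lemma semiconjBy_rhoB_rBProd {a len : ℕ} (ha : 1 ≤ a) (h : a + len ≤ n) :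
    SemiconjBy (rhoB n) (rBProd (n + 1) a len) (rBProd (n + 1) (a + 1) len) := by
  induction len with
  | zero => exact SemiconjBy.one_right _
  | succ len ih =>
    rw [rBProd_succ, rBProd_succ, Nat.add_right_comm]
    exact (ih (by omega)).mul_right (semiconjBy_rhoB_rB (by omega) (by omega))

lemma rhoB_eq_rBProd_mul_rB_mul_rB (hn : 1 ≤ n) :
    rhoB n = rBProd (n + 1) 1 (n - 1) * (rB (n + 1) n * rB (n + 1) (n + 1)) := by
  have hsplit := rBProd_add_two (m := n + 1) 1 (n - 1) 0
  rwa [rBProd_zero, mul_one, show n - 1 + (0 + 2) = n + 1 by omega,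
    show 1 + (n - 1) = n by omega, ← rhoB_eq_rBProd] at hsplit

lemma rhoB_mul_rB_mul_rB (hn : 1 ≤ n) :
    rhoB n * (rB (n + 1) n * rB (n + 1) (n + 1))
      = rB (n + 1) (n + 1) * (rhoB n * rB (n + 1) n) := by
  have hA := commute_rB_rBProd_of_gt (m := n + 1) (i := n + 1) le_rfl (len := n - 1) (by omega)
  rw [rhoB_eq_rBProd_mul_rB_mul_rB hn]
  calc _ = rBProd (n + 1) 1 (n - 1) *
        (rB (n + 1) n * rB (n + 1) (n + 1) * rB (n + 1) n * rB (n + 1) (n + 1)) := by group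
    _ = rBProd (n + 1) 1 (n - 1) * rB (n + 1) (n + 1) *
        (rB (n + 1) n * rB (n + 1) (n + 1) * rB (n + 1) n) := by
      rw [rB_braid_four hn rfl]; group
    _ = _ := by rw [← hA.eq]; group

lemma semiconjBy_rhoB_sq_rB (hn : 1 ≤ n) :
    SemiconjBy (rhoB n ^ 2) (rB (n + 1) n) (rB (n + 1) 1) := by
  have hρ : rhoB n = rB (n + 1) 1 * (rBProd (n + 1) 2 (n - 1) * rB (n + 1) (n + 1)) := by
    have h := rBProd_succ (m := n + 1) 2 (n - 1)
    rw [show n - 1 + 1 = n by omega, show 2 + (n - 1) = n + 1 by omega] at h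
    rw [rhoB_eq_rBProd, rBProd_succ', ← h]
  have hA := (semiconjBy_rhoB_rBProd (n := n) (a := 1) (len := n - 1) le_rfl (by omega)).eq
  rw [SemiconjBy, eq_comm]
  calc rB (n + 1) 1 * rhoB n ^ 2
      = rB (n + 1) 1 * (rhoB n * rBProd (n + 1) 1 (n - 1) *
          (rB (n + 1) n * rB (n + 1) (n + 1))) := by
        rw [sq, mul_assoc (rhoB n), ← rhoB_eq_rBProd_mul_rB_mul_rB hn]
    _ = rB (n + 1) 1 * (rBProd (n + 1) 2 (n - 1) *
          (rhoB n * (rB (n + 1) n * rB (n + 1) (n + 1)))) := by rw [hA]; group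
    _ = rB (n + 1) 1 * (rBProd (n + 1) 2 (n - 1) * rB (n + 1) (n + 1)) * rhoB n *
          rB (n + 1) n := by rw [rhoB_mul_rB_mul_rB hn]; group
    _ = rhoB n ^ 2 * rB (n + 1) n := by rw [← hρ, sq]

end ArtinB

/-- `ρ_B r_i ρ_B⁻¹ = r_{i+1}` for `1 ≤ i ≤ n-1`, and `ρ_B² rₙ ρ_B⁻² = r₁`. -/
theorem stmt4 (n : ℕ) (hn : 1 ≤ n) :
    (∀ i : ℕ, 1 ≤ i → i ≤ n - 1 →
      rhoB n * rB (n + 1) i * (rhoB n)⁻¹ = rB (n + 1) (i + 1)) ∧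
    rhoB n ^ 2 * rB (n + 1) n * (rhoB n ^ 2)⁻¹ = rB (n + 1) 1 :=
  ⟨fun i hi hin => mul_inv_eq_of_eq_mul (ArtinB.semiconjBy_rhoB_rB hi (by omega)).eq,
    mul_inv_eq_of_eq_mul (ArtinB.semiconjBy_rhoB_sq_rB hn).eq⟩
end

section
/- There exists a well-defined group homomorphism ι_B from the Artin group A[B_{n+1}] to the Artin group A[A_{n+1}] sending r_i to s_i' for all 1 ≤ i ≤ n and r_{n+1} to (s_{n+1}')², i.e., the images satisfy all defining relations of A[B_{n+1}]. -/
open FreeGroup in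
/-- Defining relations of the Artin group of type `A n` (the braid group on
`n+1` strands): generators indexed by `Fin n` (index `k` represents `s (k+1)`). -/
def ArtinARels (n : ℕ) : Set (FreeGroup (Fin n)) :=
  {w | ∃ i j : Fin n,
    ((j : ℕ) = (i : ℕ) + 1 ∧ w = of i * of j * of i * (of j * of i * of j)⁻¹) ∨
    ((i : ℕ) + 1 < (j : ℕ) ∧ w = of i * of j * (of j * of i)⁻¹)}

/-- The Artin group of type `A n`. -/
def ArtinA (n : ℕ) : Type := PresentedGroup (ArtinARels n)

instance (n : ℕ) : Group (ArtinA n) :=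
  inferInstanceAs (Group (PresentedGroup (ArtinARels n)))

/-- The standard generator `s i` (1-based, so `1 ≤ i ≤ n`) of `A[A n]`. -/
def sA (n : ℕ) (i : ℕ) : ArtinA n :=
  if h : i - 1 < n then PresentedGroup.of ⟨i - 1, h⟩ else 1

/-- The Garside element `Δ = (s₁⋯sₙ)(s₁⋯s_{n-1})⋯(s₁s₂)s₁` of `A[A n]`. -/
def deltaA (n : ℕ) : ArtinA n :=
  ((List.range n).reverse.map
    (fun k => ((List.range (k + 1)).map (fun i => sA n (i + 1))).prod)).prod

/-!
Squaring a generator of a braid relation of length three yields a braid relation of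
length four: if `a b a = b a b` then both `a b² a b²` and `b² a b² a` equal `(b a b)²`.
Commuting generators stay commuting after squaring, so `r_i ↦ s_i` (`i ≤ n`) and
`r_{n+1} ↦ s_{n+1}²` respects every defining relation of `A[B_{n+1}]`.
-/

theorem braid_four_sq_right {G : Type*} [Group G] {a b : G} (h : a * b * a = b * a * b) :
    a * b ^ 2 * a * b ^ 2 = b ^ 2 * a * b ^ 2 * a := by
  have hl : a * b ^ 2 * a * b ^ 2 = (a * b * a) * (b * a * b) :=
    calc a * b ^ 2 * a * b ^ 2 = a * b * (b * a * b) * b := by simp only [sq, mul_assoc]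
      _ = a * b * (a * b * a) * b := by rw [h]
      _ = (a * b * a) * (b * a * b) := by simp only [mul_assoc]
  have hr : b ^ 2 * a * b ^ 2 * a = (b * a * b) * (a * b * a) :=
    calc b ^ 2 * a * b ^ 2 * a = b * (b * a * b) * b * a := by simp only [sq, mul_assoc]
      _ = b * (a * b * a) * b * a := by rw [h]
      _ = (b * a * b) * (a * b * a) := by simp only [mul_assoc]
  rw [hl, hr, h]

namespace ArtinA

variable {n : ℕ}

def of (k : Fin n) : ArtinA n :=
  PresentedGroup.of k

theorem of_braid (i j : Fin n) (h : (j : ℕ) = i + 1) : of i * of j * of i = of j * of i * of j :=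
  PresentedGroup.mk_eq_mk_of_mul_inv_mem ⟨i, j, .inl ⟨h, rfl⟩⟩

theorem of_commute (i j : Fin n) (h : (i : ℕ) + 1 < j) : Commute (of i) (of j) :=
  PresentedGroup.mk_eq_mk_of_mul_inv_mem ⟨i, j, .inr ⟨h, rfl⟩⟩

theorem sA_succ (k : ℕ) (hk : k < n) : sA n (k + 1) = of ⟨k, hk⟩ :=
  dif_pos hk

end ArtinA

namespace ArtinB

variable {n : ℕ}

def of (k : Fin n) : ArtinB n :=
  PresentedGroup.of k

theorem rB_succ (k : ℕ) (hk : k < n) : rB n (k + 1) = of ⟨k, hk⟩ :=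
  dif_pos hk

def iotaGen (n : ℕ) (k : Fin (n + 1)) : ArtinA (n + 1) :=
  ArtinA.of k ^ (if (k : ℕ) = n then 2 else 1)

theorem iotaGen_rels (n : ℕ) :
    ∀ r ∈ ArtinBRels (n + 1), FreeGroup.lift (iotaGen n) r = 1 := by
  rintro r ⟨i, j, ⟨hij, hjn, rfl⟩ | ⟨hij, hjn, rfl⟩ | ⟨hij, rfl⟩⟩ <;>
    simp only [map_mul, map_inv, FreeGroup.lift_apply_of, mul_inv_eq_one]
  · simp only [iotaGen, show (i : ℕ) ≠ n by omega, show (j : ℕ) ≠ n by omega, if_false, pow_one]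
    exact ArtinA.of_braid i j hij
  · simp only [iotaGen, show (i : ℕ) ≠ n by omega, show (j : ℕ) = n by omega, if_false,
      if_true, pow_one]
    exact braid_four_sq_right (ArtinA.of_braid i j hij)
  · exact (ArtinA.of_commute i j hij).pow_pow _ _

/-- The homomorphism `ι_B : A[B_{n+1}] → A[A_{n+1}]`. -/
def iota (n : ℕ) : ArtinB (n + 1) →* ArtinA (n + 1) :=
  PresentedGroup.toGroup (iotaGen_rels n)

theorem iota_of (k : Fin (n + 1)) : iota n (of k) = iotaGen n k :=
  PresentedGroup.toGroup.of _

end ArtinB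

/-- There is a (well-defined) group homomorphism `ι_B : A[B (n+1)] → A[A (n+1)]`
with `r_i ↦ s_i'` for `1 ≤ i ≤ n` and `r_{n+1} ↦ (s_{n+1}')²`. -/
theorem stmt5 (n : ℕ) :
    ∃ φ : ArtinB (n + 1) →* ArtinA (n + 1),
      (∀ i : ℕ, 1 ≤ i → i ≤ n → φ (rB (n + 1) i) = sA (n + 1) i) ∧
      φ (rB (n + 1) (n + 1)) = sA (n + 1) (n + 1) ^ 2 := by
  refine ⟨ArtinB.iota n, fun i hi1 hin => ?_, ?_⟩
  · obtain ⟨k, rfl⟩ : ∃ k, i = k + 1 := ⟨i - 1, by omega⟩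
    rw [ArtinB.rB_succ k (by omega), ArtinB.iota_of, ArtinA.sA_succ k (by omega),
      ArtinB.iotaGen, if_neg (Nat.ne_of_lt hin), pow_one]
  · rw [ArtinB.rB_succ n (by omega), ArtinB.iota_of, ArtinA.sA_succ n (by omega),
      ArtinB.iotaGen, if_pos rfl]
end

section
/- In the braid group A[A_{n+1}], the images s_1'², s_2'², ..., s_{n+1}'² of the squares of the generators, together with all conjugates of these squares by generators, lie in the subgroup generated by s_1', ..., s_n', (s_{n+1}')². In particular, the kernel of the natural projection ω: A[A_{n+1}] → W[A_{n+1}] onto the symmetric group is contained in the subgroup generated by s_1', ..., s_n', (s_{n+1}')². -/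
/-- The subgroup of the braid group `A[A (n+1)]` generated by
`s₁', …, sₙ', (s_{n+1}')²`. -/
def genB (n : ℕ) : Subgroup (ArtinA (n + 1)) :=
  Subgroup.closure
    ({g | ∃ i : ℕ, 1 ≤ i ∧ i ≤ n ∧ g = sA (n + 1) i} ∪ {sA (n + 1) (n + 1) ^ 2})

/-!
Let `H = genB n` and `t_k = s_{n+1} s_n ⋯ s_{k+1}` for `k ≤ n + 1` (`cosetRep n k`). The braid
relations give `s_{k+1} s_k² s_{k+1}⁻¹ = s_k⁻¹ s_{k+1}² s_k`, so downward induction from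
`s_{n+1}² ∈ H` puts `t_k s_k² t_k⁻¹` in `H`. With this, right multiplication by `s_j` maps the
coset `H t_k` into `H t_{k'}`, where `k'` is the image of `k` under the transposition `(j-1 j)`;
as that transposition is an involution, the same holds for `s_j⁻¹`, so the cosets `H t_k` cover
the braid group. Under `ω`, every element of `H` fixes the last point `n + 1`, while
`ω(t_k)` moves `k` to it; so an element `h t_k` of the kernel has `k = n + 1`, i.e. `t_k = 1`.
-/

theorem conj_sq_eq_of_braid {G : Type*} [Group G] {a b : G} (h : a * b * a = b * a * b) :
    b * a ^ 2 * b⁻¹ = a⁻¹ * b ^ 2 * a :=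
  calc b * a ^ 2 * b⁻¹ = a⁻¹ * (a * b * a) * a * b⁻¹ := by rw [sq]; group
    _ = a⁻¹ * (b * a * b) * a * b⁻¹ := by rw [h]
    _ = a⁻¹ * b * (a * b * a) * b⁻¹ := by group
    _ = a⁻¹ * b * (b * a * b) * b⁻¹ := by rw [h]
    _ = a⁻¹ * b ^ 2 * a := by rw [sq]; group

theorem conj_conj_sq_eq_of_braid {G : Type*} [Group G] {a b c : G} (h : a * b * a = b * a * b)
    (hc : Commute a c) : c * b * a ^ 2 * (c * b)⁻¹ = a⁻¹ * (c * b ^ 2 * c⁻¹) * a :=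
  calc c * b * a ^ 2 * (c * b)⁻¹ = c * (b * a ^ 2 * b⁻¹) * c⁻¹ := by group
    _ = (c * a⁻¹) * b ^ 2 * (c * a⁻¹)⁻¹ := by rw [conj_sq_eq_of_braid h]; group
    _ = (a⁻¹ * c) * b ^ 2 * (a⁻¹ * c)⁻¹ := by rw [hc.inv_left.eq]
    _ = a⁻¹ * (c * b ^ 2 * c⁻¹) * a := by group

theorem Subgroup.inv_mul_mul_mem_of_sq_mem {G : Type*} [Group G] {H : Subgroup G} {a x : G}
    (ha : a ^ 2 ∈ H) (h : a * x * a⁻¹ ∈ H) : a⁻¹ * x * a ∈ H := by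
  have e : a⁻¹ * x * a = (a ^ 2)⁻¹ * (a * x * a⁻¹) * a ^ 2 := by group
  rw [e]
  exact H.mul_mem (H.mul_mem (H.inv_mem ha) h) ha

theorem Subgroup.exists_mul_inv_mem_of_closure_eq_top {G : Type*} [Group G] {S : Set G}
    (hS : closure S = ⊤) (H : Subgroup G) {T : Set G} (hT : 1 ∈ T)
    (hmul : ∀ t ∈ T, ∀ s ∈ S, ∃ t' ∈ T, t * s * t'⁻¹ ∈ H)
    (hinv : ∀ t ∈ T, ∀ s ∈ S, ∃ t' ∈ T, t * s⁻¹ * t'⁻¹ ∈ H) (g : G) :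
    ∃ t ∈ T, g * t⁻¹ ∈ H := by
  have hg : g ∈ closure S := hS ▸ mem_top g
  induction hg using closure_induction_right with
  | one => exact ⟨1, hT, by simp⟩
  | mul_right g _ s hs ih =>
    obtain ⟨t, ht, hgt⟩ := ih
    obtain ⟨t', ht', hst⟩ := hmul t ht s hs
    exact ⟨t', ht', by simpa only [mul_assoc, inv_mul_cancel_left] using H.mul_mem hgt hst⟩
  | mul_inv_cancel g _ s hs ih =>
    obtain ⟨t, ht, hgt⟩ := ih
    obtain ⟨t', ht', hst⟩ := hinv t ht s hs
    exact ⟨t', ht', by simpa only [mul_assoc, inv_mul_cancel_left] using H.mul_mem hgt hst⟩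

theorem swap_succ_apply_le {j k N : ℕ} (hj : j < N) (hk : k ≤ N) :
    Equiv.swap j (j + 1) k ≤ N := by
  rw [Equiv.swap_apply_def]
  split_ifs <;> omega

section BraidRelations

variable {n : ℕ}

theorem sA_eq_of {i : ℕ} (h : i - 1 < n) : sA n i = PresentedGroup.of ⟨i - 1, h⟩ := dif_pos h

theorem sA_braid {i : ℕ} (h₁ : 1 ≤ i) (h₂ : i + 1 ≤ n) :
    sA n i * sA n (i + 1) * sA n i = sA n (i + 1) * sA n i * sA n (i + 1) := by
  rw [sA_eq_of (i := i) (by omega), sA_eq_of (i := i + 1) (by omega)]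
  have h := PresentedGroup.mk_eq_mk_of_mul_inv_mem (rels := ArtinARels n)
    ⟨⟨i - 1, by omega⟩, ⟨i + 1 - 1, by omega⟩, Or.inl ⟨by dsimp only; omega, rfl⟩⟩
  simp only [map_mul] at h
  exact h

theorem sA_commute {i j : ℕ} (h₁ : 1 ≤ i) (h₂ : i + 2 ≤ j) (h₃ : j ≤ n) :
    Commute (sA n i) (sA n j) := by
  rw [sA_eq_of (i := i) (by omega), sA_eq_of (i := j) (by omega)]
  have h := PresentedGroup.mk_eq_mk_of_mul_inv_mem (rels := ArtinARels n)
    ⟨⟨i - 1, by omega⟩, ⟨j - 1, by omega⟩, Or.inr ⟨by dsimp only; omega, rfl⟩⟩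
  simp only [map_mul] at h
  exact h

theorem closure_sA_eq_top :
    Subgroup.closure {g : ArtinA n | ∃ i, 1 ≤ i ∧ i ≤ n ∧ g = sA n i} = ⊤ := by
  refine top_unique ((PresentedGroup.closure_range_of (ArtinARels n)).ge.trans
    (Subgroup.closure_mono ?_))
  rintro _ ⟨a, rfl⟩
  exact ⟨a + 1, by omega, a.is_lt, (sA_eq_of (i := a + 1) (by simp)).symm⟩

end BraidRelations

def cosetRep (n k : ℕ) : ArtinA (n + 1) :=
  if k ≤ n then cosetRep n (k + 1) * sA (n + 1) (k + 1) else 1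
termination_by n + 1 - k

section CosetRepresentatives

variable {n : ℕ}

theorem sA_mem_genB {i : ℕ} (h₁ : 1 ≤ i) (h₂ : i ≤ n) : sA (n + 1) i ∈ genB n :=
  Subgroup.subset_closure (Or.inl ⟨i, h₁, h₂, rfl⟩)

theorem sA_sq_mem_genB {i : ℕ} (h₁ : 1 ≤ i) (h₂ : i ≤ n + 1) : sA (n + 1) i ^ 2 ∈ genB n := by
  obtain h | rfl : i ≤ n ∨ i = n + 1 := by omega
  · exact pow_mem (sA_mem_genB h₁ h) 2
  · exact Subgroup.subset_closure (Or.inr rfl)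

theorem cosetRep_of_le {k : ℕ} (hk : k ≤ n) :
    cosetRep n k = cosetRep n (k + 1) * sA (n + 1) (k + 1) := by
  rw [cosetRep, if_pos hk]

theorem cosetRep_of_lt {k : ℕ} (hk : n < k) : cosetRep n k = 1 := by
  rw [cosetRep, if_neg (by omega)]

theorem commute_sA_cosetRep {j k : ℕ} (hj : 1 ≤ j) (hjk : j + 1 ≤ k) :
    Commute (sA (n + 1) j) (cosetRep n k) := by
  induction k using cosetRep.induct n with
  | case1 k hk ih =>
    rw [cosetRep_of_le hk]
    exact (ih (by omega)).mul_right (sA_commute hj (by omega) (by omega))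
  | case2 k hk =>
    rw [cosetRep_of_lt (by omega)]
    exact Commute.one_right _

theorem cosetRep_mul_sA_succ {k m : ℕ} (hkm : k < m) (hm : 1 ≤ m) (hmn : m ≤ n) :
    cosetRep n k * sA (n + 1) (m + 1) = sA (n + 1) m * cosetRep n k := by
  induction k using cosetRep.induct n with
  | case1 k hk ih =>
    rw [cosetRep_of_le hk]
    obtain hlt | rfl : k + 1 < m ∨ k + 1 = m := by omega
    · have hc : Commute (sA (n + 1) (k + 1)) (sA (n + 1) (m + 1)) :=
        sA_commute (by omega) (by omega) (by omega)
      rw [mul_assoc, hc.eq, ← mul_assoc, ih hlt, mul_assoc]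
    · have hcomm := commute_sA_cosetRep (n := n) hm (le_refl (k + 2))
      rw [cosetRep_of_le (k := k + 1) hmn]
      calc cosetRep n (k + 2) * sA (n + 1) (k + 2) * sA (n + 1) (k + 1) * sA (n + 1) (k + 2)
          = cosetRep n (k + 2) *
              (sA (n + 1) (k + 1) * sA (n + 1) (k + 2) * sA (n + 1) (k + 1)) := by
            rw [sA_braid hm (by omega)]; group
        _ = sA (n + 1) (k + 1) *
              (cosetRep n (k + 2) * sA (n + 1) (k + 2) * sA (n + 1) (k + 1)) := by
            rw [← mul_assoc, ← mul_assoc, ← hcomm.eq]; group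
  | case2 k hk => omega

theorem cosetRep_conj_sq_mem {k : ℕ} (hk₁ : 1 ≤ k) (hk₂ : k ≤ n + 1) :
    cosetRep n k * sA (n + 1) k ^ 2 * (cosetRep n k)⁻¹ ∈ genB n := by
  induction k using cosetRep.induct n with
  | case1 k hk ih =>
    rw [cosetRep_of_le hk, conj_conj_sq_eq_of_braid (sA_braid hk₁ (by omega))
      (commute_sA_cosetRep hk₁ le_rfl)]
    have ha := sA_mem_genB hk₁ hk
    exact (genB n).mul_mem
      ((genB n).mul_mem ((genB n).inv_mem ha) (ih (by omega) (by omega))) ha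
  | case2 k hk =>
    rw [cosetRep_of_lt (by omega), one_mul, inv_one, mul_one]
    exact sA_sq_mem_genB hk₁ hk₂

theorem cosetRep_mul_sA_mul_inv_mem {j k : ℕ} (hj : j ≤ n) (hk : k ≤ n + 1) :
    cosetRep n k * sA (n + 1) (j + 1) * (cosetRep n (Equiv.swap j (j + 1) k))⁻¹ ∈ genB n := by
  obtain hjk | rfl | rfl | hkj : j + 2 ≤ k ∨ k = j + 1 ∨ k = j ∨ k < j := by omega
  · rw [Equiv.swap_apply_of_ne_of_ne (by omega) (by omega),
      (commute_sA_cosetRep (by omega) hjk).symm.mul_inv_cancel]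
    exact sA_mem_genB (by omega) (by omega)
  · rw [Equiv.swap_apply_right, cosetRep_of_le hj, mul_inv_cancel]
    exact (genB n).one_mem
  · rw [Equiv.swap_apply_left, cosetRep_of_le hj, mul_assoc (cosetRep n (k + 1)), ← sq]
    exact cosetRep_conj_sq_mem (by omega) (by omega)
  · rw [Equiv.swap_apply_of_ne_of_ne (by omega) (by omega),
      cosetRep_mul_sA_succ hkj (by omega) hj, mul_inv_cancel_right]
    exact sA_mem_genB (by omega) hj

theorem cosetRep_mul_inv_sA_mul_inv_mem {j k : ℕ} (hj : j ≤ n) (hk : k ≤ n + 1) :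
    cosetRep n k * (sA (n + 1) (j + 1))⁻¹ * (cosetRep n (Equiv.swap j (j + 1) k))⁻¹ ∈
      genB n := by
  have h := cosetRep_mul_sA_mul_inv_mem hj (swap_succ_apply_le (j := j) (by omega) hk)
  rw [Equiv.swap_apply_self] at h
  simpa only [mul_inv_rev, inv_inv, mul_assoc] using (genB n).inv_mem h

theorem exists_mul_inv_cosetRep_mem (g : ArtinA (n + 1)) :
    ∃ k ≤ n + 1, g * (cosetRep n k)⁻¹ ∈ genB n := by
  have hT : ∀ k ≤ n + 1, ∀ j ≤ n,
      cosetRep n (Equiv.swap j (j + 1) k) ∈ cosetRep n '' Set.Iic (n + 1) :=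
    fun k hk j hj => ⟨_, swap_succ_apply_le (by omega) hk, rfl⟩
  obtain ⟨_, ⟨k, hk, rfl⟩, h⟩ := Subgroup.exists_mul_inv_mem_of_closure_eq_top closure_sA_eq_top
    (genB n) (T := cosetRep n '' Set.Iic (n + 1))
    ⟨n + 1, Set.mem_Iic.2 le_rfl, cosetRep_of_lt (by omega)⟩
    (by
      rintro _ ⟨k, hk, rfl⟩ _ ⟨_, hj, hjn, rfl⟩
      obtain ⟨j, rfl⟩ := Nat.exists_eq_add_of_le' hj
      exact ⟨_, hT k hk j (by omega), cosetRep_mul_sA_mul_inv_mem (by omega) hk⟩)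
    (by
      rintro _ ⟨k, hk, rfl⟩ _ ⟨_, hj, hjn, rfl⟩
      obtain ⟨j, rfl⟩ := Nat.exists_eq_add_of_le' hj
      exact ⟨_, hT k hk j (by omega), cosetRep_mul_inv_sA_mul_inv_mem (by omega) hk⟩)
    g
  exact ⟨k, hk, h⟩

end CosetRepresentatives

open Fin.NatCast

theorem Fin.natCast_ne_last {n a : ℕ} (ha : a < n) : (a : Fin (n + 1)) ≠ Fin.last n := by
  rw [Ne, Fin.ext_iff, Fin.val_cast_of_lt (by omega), Fin.val_last]
  omega

def IsNaturalProjection {n : ℕ} (ω : ArtinA (n + 1) →* Equiv.Perm (Fin (n + 2))) : Prop :=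
  ∀ i : ℕ, 1 ≤ i → i ≤ n + 1 →
    ω (sA (n + 1) i) = Equiv.swap ((i - 1 : ℕ) : Fin (n + 2)) ((i : ℕ) : Fin (n + 2))

section NaturalProjection

variable {n : ℕ} {ω : ArtinA (n + 1) →* Equiv.Perm (Fin (n + 2))}

theorem genB_le_comap_stabilizer (hω : IsNaturalProjection ω) :
    genB n ≤ (MulAction.stabilizer (Equiv.Perm (Fin (n + 2))) (Fin.last (n + 1))).comap ω := by
  rw [genB, Subgroup.closure_le]
  rintro _ (⟨i, hi₁, hi₂, rfl⟩ | rfl)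
  · show ω (sA (n + 1) i) _ = _
    rw [hω i hi₁ (by omega)]
    exact Equiv.swap_apply_of_ne_of_ne (Fin.natCast_ne_last (a := i - 1) (by omega)).symm
      (Fin.natCast_ne_last (a := i) (by omega)).symm
  · show ω (sA (n + 1) (n + 1) ^ 2) _ = _
    rw [map_pow, hω (n + 1) (by omega) le_rfl, sq, Equiv.swap_mul_self, Equiv.Perm.one_apply]

theorem cosetRep_apply (hω : IsNaturalProjection ω) {k : ℕ} (hk : k ≤ n + 1) :
    ω (cosetRep n k) k = Fin.last (n + 1) := by
  induction k using cosetRep.induct n with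
  | case1 k hk' ih =>
    rw [cosetRep_of_le hk', map_mul, Equiv.Perm.mul_apply, hω (k + 1) (by omega) (by omega),
      Nat.add_sub_cancel, Equiv.swap_apply_left]
    exact ih (by omega)
  | case2 k hk' =>
    obtain rfl : k = n + 1 := by omega
    rw [cosetRep_of_lt (by omega), map_one, Equiv.Perm.one_apply, Fin.natCast_eq_last]

theorem ker_le_genB (hω : IsNaturalProjection ω) : ω.ker ≤ genB n := by
  intro g hg
  obtain ⟨k, hk, hgk⟩ := exists_mul_inv_cosetRep_mem g
  have hfix : ω (g * (cosetRep n k)⁻¹) (Fin.last (n + 1)) = Fin.last (n + 1) :=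
    genB_le_comap_stabilizer hω hgk
  rw [map_mul, map_inv, MonoidHom.mem_ker.mp hg, one_mul, Equiv.Perm.inv_eq_iff_eq] at hfix
  obtain rfl : k = n + 1 := by
    by_contra hne
    exact Fin.natCast_ne_last (by omega)
      ((ω (cosetRep n k)).injective ((cosetRep_apply hω hk).trans hfix))
  rwa [cosetRep_of_lt (by omega), inv_one, mul_one] at hgk

end NaturalProjection

theorem sA_conj_sq_mem_genB {n i j : ℕ} (hi₁ : 1 ≤ i) (hi₂ : i ≤ n + 1) (hj₁ : 1 ≤ j)
    (hj₂ : j ≤ n + 1) : sA (n + 1) j * sA (n + 1) i ^ 2 * (sA (n + 1) j)⁻¹ ∈ genB n := by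
  obtain hjn | rfl : j ≤ n ∨ j = n + 1 := by omega
  · have hs := sA_mem_genB hj₁ hjn
    exact (genB n).mul_mem ((genB n).mul_mem hs (sA_sq_mem_genB hi₁ hi₂)) ((genB n).inv_mem hs)
  obtain hin | rfl | rfl : i + 2 ≤ n + 1 ∨ n = i ∨ i = n + 1 := by omega
  · rw [((sA_commute hi₁ hin le_rfl).pow_left 2).symm.mul_inv_cancel]
    exact sA_sq_mem_genB hi₁ hi₂
  · simpa only [cosetRep_of_le le_rfl, cosetRep_of_lt (Nat.lt_succ_self n), one_mul]
      using cosetRep_conj_sq_mem (n := n) hi₁ (Nat.le_succ n)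
  · rw [(Commute.self_pow _ 2).mul_inv_cancel]
    exact sA_sq_mem_genB hi₁ hi₂

open Fin.NatCast in
/-- The squares of the generators of `A[A (n+1)]`, and all their conjugates by
generators, lie in the subgroup generated by `s₁', …, sₙ', (s_{n+1}')²`;
in particular the kernel of the natural projection onto the symmetric group is
contained in that subgroup. -/
theorem stmt6 (n : ℕ) :
    (∀ i : ℕ, 1 ≤ i → i ≤ n + 1 → sA (n + 1) i ^ 2 ∈ genB n) ∧
    (∀ i j : ℕ, 1 ≤ i → i ≤ n + 1 → 1 ≤ j → j ≤ n + 1 →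
      sA (n + 1) j * sA (n + 1) i ^ 2 * (sA (n + 1) j)⁻¹ ∈ genB n ∧
      (sA (n + 1) j)⁻¹ * sA (n + 1) i ^ 2 * sA (n + 1) j ∈ genB n) ∧
    (∀ ω : ArtinA (n + 1) →* Equiv.Perm (Fin (n + 2)),
      (∀ i : ℕ, 1 ≤ i → i ≤ n + 1 →
        ω (sA (n + 1) i) = Equiv.swap ((i - 1 : ℕ) : Fin (n + 2)) ((i : ℕ) : Fin (n + 2))) →
      ω.ker ≤ genB n) := by
  refine ⟨fun i hi₁ hi₂ => sA_sq_mem_genB hi₁ hi₂, fun i j hi₁ hi₂ hj₁ hj₂ => ?_,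
    fun ω hω => ker_le_genB hω⟩
  have h := sA_conj_sq_mem_genB hi₁ hi₂ hj₁ hj₂
  exact ⟨h, Subgroup.inv_mul_mul_mem_of_sq_mem (sA_sq_mem_genB hj₁ hj₂) h⟩
end

section
/- In Aut(A[Ã_n]), the subgroup generated by ζ, η, μ is isomorphic to the direct product of the dihedral group of order 2(n+1) with Z/2Z; in particular μ commutes with ζ and with η, and μ has order 2 and lies outside the subgroup generated by ζ and η. -/
/-! ### Auxiliary lemmas -/

lemma tA_rel_lift {n : ℕ} {G : Type*} [Group G] (f : ZMod (n + 1) → G)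
    (hb : ∀ i : ZMod (n + 1), f i * f (i + 1) * f i = f (i + 1) * f i * f (i + 1))
    (hc : ∀ i j : ZMod (n + 1), i ≠ j → j ≠ i + 1 → i ≠ j + 1 → f i * f j = f j * f i) :
    ∀ r ∈ ArtinAffineARels n, FreeGroup.lift f r = 1 := by
  rintro r ⟨i, j, (⟨rfl, rfl⟩ | ⟨h1, h2, h3, rfl⟩)⟩
  · simp only [map_mul, map_inv, FreeGroup.lift_apply_of, mul_inv_eq_one]
    exact hb i
  · simp only [map_mul, map_inv, FreeGroup.lift_apply_of, mul_inv_eq_one]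
    exact hc i j h1 h2 h3

/-- The homomorphism to `G` determined by a map on the generators satisfying the relations. -/
def tA_hom {n : ℕ} {G : Type*} [Group G] (f : ZMod (n + 1) → G)
    (hb : ∀ i : ZMod (n + 1), f i * f (i + 1) * f i = f (i + 1) * f i * f (i + 1))
    (hc : ∀ i j : ZMod (n + 1), i ≠ j → j ≠ i + 1 → i ≠ j + 1 → f i * f j = f j * f i) :
    ArtinAffineA n →* G :=
  PresentedGroup.toGroup (tA_rel_lift f hb hc)

lemma tA_hom_apply {n : ℕ} {G : Type*} [Group G] (f : ZMod (n + 1) → G) (hb) (hc)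
    (i : ZMod (n + 1)) : tA_hom f hb hc (tA n i) = f i :=
  PresentedGroup.toGroup.of _

/-- Abelianized length homomorphism. -/
noncomputable def tA_ab (n : ℕ) : ArtinAffineA n →* Multiplicative ℤ :=
  tA_hom (fun _ => Multiplicative.ofAdd 1)
    (fun _ => rfl) (fun _ _ _ _ _ => mul_comm _ _)

lemma tA_ne_inv (n : ℕ) (i j : ZMod (n + 1)) : tA n i ≠ (tA n j)⁻¹ := by
  intro h
  have h2 := congrArg (tA_ab n) h
  rw [map_inv, tA_ab, tA_hom_apply, tA_hom_apply] at h2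
  have := congrArg Multiplicative.toAdd h2
  simp at this

lemma aut_ext {n : ℕ} {f g : MulAut (ArtinAffineA n)}
    (h : ∀ i : ZMod (n + 1), f (tA n i) = g (tA n i)) : f = g := by
  have : (f : ArtinAffineA n →* ArtinAffineA n) = g := PresentedGroup.ext h
  exact MulEquiv.toMonoidHom_injective this

lemma tA_injective (n : ℕ) (hn : 2 ≤ n) : Function.Injective (tA n) := by
  haveI : Fact (1 < n + 1) := ⟨by omega⟩
  have h1 : (1 : ZMod (n + 1)) ≠ 0 := one_ne_zero
  have h2 : (2 : ZMod (n + 1)) ≠ 0 := by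
    intro h
    have : ((2 : ℕ) : ZMod (n + 1)) = 0 := by exact_mod_cast h
    rw [ZMod.natCast_eq_zero_iff] at this
    have := Nat.le_of_dvd (by norm_num) this
    omega
  have hne1 : ∀ i : ZMod (n + 1), i ≠ i + 1 := by
    intro i h
    exact h1 (by linear_combination -h)
  have hne2 : ∀ i : ZMod (n + 1), i ≠ i + 1 + 1 := by
    intro i h
    exact h2 (by linear_combination -h)
  -- homomorphism to the symmetric group
  have hb : ∀ i : ZMod (n + 1),
      Equiv.swap i (i + 1) * Equiv.swap (i + 1) (i + 1 + 1) * Equiv.swap i (i + 1) =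
      Equiv.swap (i + 1) (i + 1 + 1) * Equiv.swap i (i + 1) * Equiv.swap (i + 1) (i + 1 + 1) := by
    intro i
    have e1 : Equiv.swap i (i + 1) * Equiv.swap (i + 1) (i + 1 + 1) * Equiv.swap i (i + 1) =
        Equiv.swap ((Equiv.swap i (i + 1)) (i + 1)) ((Equiv.swap i (i + 1)) (i + 1 + 1)) := by
      rw [Equiv.swap_apply_apply, Equiv.swap_inv]
    have e2 : Equiv.swap (i + 1) (i + 1 + 1) * Equiv.swap i (i + 1) *
          Equiv.swap (i + 1) (i + 1 + 1) =
        Equiv.swap ((Equiv.swap (i + 1) (i + 1 + 1)) i) ((Equiv.swap (i + 1) (i + 1 + 1)) (i + 1))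
        := by rw [Equiv.swap_apply_apply, Equiv.swap_inv]
    rw [e1, e2, Equiv.swap_apply_right,
      Equiv.swap_apply_of_ne_of_ne (fun h => hne2 i h.symm) (fun h => hne1 (i + 1) h.symm),
      Equiv.swap_apply_of_ne_of_ne (fun h => hne1 i h) (fun h => hne2 i h),
      Equiv.swap_apply_left]
  have hc : ∀ i j : ZMod (n + 1), i ≠ j → j ≠ i + 1 → i ≠ j + 1 →
      Equiv.swap i (i + 1) * Equiv.swap j (j + 1) = Equiv.swap j (j + 1) * Equiv.swap i (i + 1)
      := by
    intro i j hij hji1 hij1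
    have e1 : Equiv.swap j (j + 1) =
        Equiv.swap ((Equiv.swap i (i + 1)) j) ((Equiv.swap i (i + 1)) (j + 1)) := by
      rw [Equiv.swap_apply_of_ne_of_ne (fun h => hij h.symm) (fun h => hji1 h),
        Equiv.swap_apply_of_ne_of_ne (fun h => hij1 h.symm)
          (fun h => hij (by linear_combination -h))]
    calc Equiv.swap i (i + 1) * Equiv.swap j (j + 1)
        = Equiv.swap i (i + 1) * Equiv.swap j (j + 1) * (Equiv.swap i (i + 1))⁻¹ *
            Equiv.swap i (i + 1) := by group
      _ = Equiv.swap j (j + 1) * Equiv.swap i (i + 1) := by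
          rw [← Equiv.swap_apply_apply, ← e1]
  set σ := tA_hom (fun i : ZMod (n + 1) => Equiv.swap i (i + 1)) hb hc with hσ
  intro i j h
  have hs : Equiv.swap i (i + 1) = Equiv.swap j (j + 1) := by
    have := congrArg σ h
    rwa [hσ, tA_hom_apply, tA_hom_apply] at this
  by_cases hij : i = j
  · exact hij
  exfalso
  have hi := congrArg (fun e : Equiv.Perm (ZMod (n + 1)) => e i) hs
  simp only [Equiv.swap_apply_left] at hi
  by_cases hij1 : i = j + 1
  · rw [hij1, Equiv.swap_apply_right] at hi
    exact hne2 j (by linear_combination -hi)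
  · rw [Equiv.swap_apply_of_ne_of_ne hij hij1] at hi
    exact hne1 i hi.symm

/-- The subgroup of `Aut (A[Ã n])` generated by `ζ, η, μ` is isomorphic to the
direct product of the dihedral group of order `2(n+1)` with `ℤ/2ℤ`; `μ`
commutes with `ζ` and `η`, has order `2`, and lies outside `⟨ζ, η⟩`. -/
theorem stmt11 (n : ℕ) (hn : 2 ≤ n) (ζ η μ : MulAut (ArtinAffineA n))
    (hζ : ∀ i : ZMod (n + 1), ζ (tA n i) = tA n (i + 1))
    (hη : ∀ i : ZMod (n + 1), η (tA n i) = tA n (((n : ℕ) : ZMod (n + 1)) - i))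
    (hμ : ∀ i : ZMod (n + 1), μ (tA n i) = (tA n i)⁻¹) :
    Commute μ ζ ∧ Commute μ η ∧ orderOf μ = 2 ∧
    μ ∉ (Subgroup.closure {ζ, η} : Subgroup (MulAut (ArtinAffineA n))) ∧
    Nonempty ((Subgroup.closure {ζ, η, μ} : Subgroup (MulAut (ArtinAffineA n)))
      ≃* DihedralGroup (n + 1) × Multiplicative (ZMod 2)) := by
  haveI : Fact (1 < n + 1) := ⟨by omega⟩
  have tinj : Function.Injective (tA n) := tA_injective n hn
  have h2ne : (2 : ZMod (n + 1)) ≠ 0 := by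
    intro h
    have : ((2 : ℕ) : ZMod (n + 1)) = 0 := by exact_mod_cast h
    rw [ZMod.natCast_eq_zero_iff] at this
    have := Nat.le_of_dvd (by norm_num) this
    omega
  have hvc : ∀ a : ZMod (n + 1), ((a.val : ℕ) : ZMod (n + 1)) = a := fun a => by
    rw [ZMod.natCast_val, ZMod.cast_id]
  -- action of η
  have hηa : ∀ i : ZMod (n + 1), η (tA n i) = tA n (-1 - i) := by
    intro i
    rw [hη]
    congr 1
    have : ((n : ℕ) : ZMod (n + 1)) = -1 := by
      have := ZMod.natCast_self (n + 1)
      push_cast at this ⊢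
      linear_combination this
    rw [this]
  -- action of powers of ζ
  have hζp : ∀ (m : ℕ) (i : ZMod (n + 1)), (ζ ^ m) (tA n i) = tA n (i + (m : ZMod (n + 1)))
      := by
    intro m
    induction m with
    | zero => intro i; simp
    | succ k ih =>
      intro i
      rw [pow_succ', MulAut.mul_apply, ih, hζ]
      congr 1
      push_cast
      ring
  -- basic relations
  have hμ2 : μ ^ 2 = 1 := by
    rw [pow_two]
    apply aut_ext
    intro i
    rw [MulAut.mul_apply, hμ, map_inv, hμ, inv_inv, MulAut.one_apply]
  have hcζ : Commute μ ζ := by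
    apply aut_ext
    intro i
    rw [MulAut.mul_apply, MulAut.mul_apply, hζ, hμ, hμ, map_inv, hζ]
  have hcη : Commute μ η := by
    apply aut_ext
    intro i
    rw [MulAut.mul_apply, MulAut.mul_apply, hηa, hμ, hμ, map_inv, hηa]
  have hμ1 : μ ≠ 1 := by
    intro h
    have := hμ 0
    rw [h, MulAut.one_apply] at this
    exact tA_ne_inv n 0 0 this
  -- the dihedral part
  set F : DihedralGroup (n + 1) →* MulAut (ArtinAffineA n) :=
    MonoidHom.mk' (fun d : DihedralGroup (n + 1) => match d with
        | .r k => ζ ^ k.val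
        | .sr k => η * ζ ^ k.val) (by
      rintro (i | i) (j | j)
      · show ζ ^ ((i + j).val) = ζ ^ i.val * ζ ^ j.val
        apply aut_ext; intro x
        simp only [MulAut.mul_apply, hζp, hηa, hvc]; congr 1; ring
      · show η * ζ ^ ((j - i).val) = ζ ^ i.val * (η * ζ ^ j.val)
        apply aut_ext; intro x
        simp only [MulAut.mul_apply, hζp, hηa, hvc]; congr 1; ring
      · show η * ζ ^ ((i + j).val) = (η * ζ ^ i.val) * ζ ^ j.val
        apply aut_ext; intro x
        simp only [MulAut.mul_apply, hζp, hηa, hvc]; congr 1; ring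
      · show ζ ^ ((j - i).val) = (η * ζ ^ i.val) * (η * ζ ^ j.val)
        apply aut_ext; intro x
        simp only [MulAut.mul_apply, hζp, hηa, hvc]; congr 1; ring) with hF
  have hFr : ∀ k : ZMod (n + 1), F (.r k) = ζ ^ k.val := fun _ => rfl
  have hFsr : ∀ k : ZMod (n + 1), F (.sr k) = η * ζ ^ k.val := fun _ => rfl
  -- the ℤ/2 part
  have Gmul : ∀ a b : Multiplicative (ZMod 2),
      μ ^ (Multiplicative.toAdd (a * b)).val =
        μ ^ (Multiplicative.toAdd a).val * μ ^ (Multiplicative.toAdd b).val := by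
    intro a b
    have : Multiplicative.toAdd (a * b) = Multiplicative.toAdd a + Multiplicative.toAdd b := rfl
    rw [this, ZMod.val_add, ← pow_eq_pow_mod _ hμ2, pow_add]
  set G2 : Multiplicative (ZMod 2) →* MulAut (ArtinAffineA n) :=
    MonoidHom.mk' (fun s => μ ^ (Multiplicative.toAdd s).val) Gmul with hG2
  -- the combined homomorphism
  have hcomm : ∀ (d : DihedralGroup (n + 1)) (s : Multiplicative (ZMod 2)),
      Commute (F d) (G2 s) := by
    rintro (k | k) s
    · exact (hcζ.symm.pow_pow _ _)
    · exact Commute.mul_left (hcη.symm.pow_right _) (hcζ.symm.pow_pow _ _)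
  set Φ : DihedralGroup (n + 1) × Multiplicative (ZMod 2) →* MulAut (ArtinAffineA n) :=
    F.noncommCoprod G2 hcomm with hΦ
  have hΦa : ∀ (d : DihedralGroup (n + 1)) (s : Multiplicative (ZMod 2)),
      Φ (d, s) = F d * G2 s := fun _ _ => rfl
  -- key values
  have hζeq : Φ (.r 1, 1) = ζ := by
    rw [hΦa, hFr]
    simp [hG2, ZMod.val_one]
  have hηeq : Φ (.sr 0, 1) = η := by
    rw [hΦa, hFsr]
    simp [hG2, ZMod.val_zero]
  have hμeq : Φ (.r 0, Multiplicative.ofAdd 1) = μ := by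
    rw [hΦa, hFr]
    simp [hG2, ZMod.val_zero, ZMod.val_one]
  -- injectivity of Φ
  have hinj : Function.Injective Φ := by
    rw [injective_iff_map_eq_one]
    rintro ⟨d, s⟩ h
    have hvlt : (Multiplicative.toAdd s).val < 2 := ZMod.val_lt _
    have hv : (Multiplicative.toAdd s).val = 0 ∨ (Multiplicative.toAdd s).val = 1 := by omega
    have happ : ∀ x : ZMod (n + 1), (Φ (d, s)) (tA n x) = tA n x := by
      intro x; rw [h, MulAut.one_apply]
    rcases d with k | k
    · rcases hv with hv0 | hv1
      · have h0 := happ 0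
        rw [hΦa, hFr] at h0
        simp only [hG2, MonoidHom.mk'_apply, hv0, pow_zero, mul_one, hζp, hvc, zero_add] at h0
        have hk : k = 0 := tinj h0
        have hs : s = 1 := by
          rw [← ofAdd_toAdd s, (ZMod.val_eq_zero _).mp hv0, ofAdd_zero]
        rw [hk, hs, ← DihedralGroup.one_def]
        rfl
      · exfalso
        have h0 := happ 0
        rw [hΦa, hFr] at h0
        simp only [hG2, MonoidHom.mk'_apply, hv1, pow_one, MulAut.mul_apply, hμ, map_inv,
          hζp, hvc, zero_add] at h0
        exact tA_ne_inv n 0 (k : ZMod (n + 1)) h0.symm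
    · exfalso
      rcases hv with hv0 | hv1
      · have h0 := happ 0
        have h1 := happ 1
        rw [hΦa, hFsr] at h0 h1
        simp only [hG2, MonoidHom.mk'_apply, hv0, pow_zero, mul_one, MulAut.mul_apply,
          hζp, hηa, hvc, zero_add] at h0 h1
        have e0 := tinj h0
        have e1 := tinj h1
        exact h2ne (by linear_combination e0 - e1)
      · have h0 := happ 0
        rw [hΦa, hFsr] at h0
        simp only [hG2, MonoidHom.mk'_apply, hv1, pow_one, MulAut.mul_apply, hμ, map_inv,
          hζp, hηa, hvc, zero_add] at h0
        exact tA_ne_inv n 0 _ h0.symm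
  -- μ is not in ⟨ζ, η⟩
  have hnotin : μ ∉ (Subgroup.closure {ζ, η} : Subgroup (MulAut (ArtinAffineA n))) := by
    intro hmem
    have hsub : (Subgroup.closure {ζ, η} : Subgroup (MulAut (ArtinAffineA n))) ≤
        (Φ.comp (MonoidHom.inl _ _)).range := by
      rw [Subgroup.closure_le]
      rintro x hx
      simp only [Set.mem_insert_iff, Set.mem_singleton_iff] at hx
      rcases hx with rfl | rfl
      · exact ⟨.r 1, hζeq⟩
      · exact ⟨.sr 0, hηeq⟩
    obtain ⟨d, hd⟩ := hsub hmem
    have : ((d, 1) : DihedralGroup (n + 1) × Multiplicative (ZMod 2)) =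
        (.r 0, Multiplicative.ofAdd 1) := hinj (by rw [hd.symm] at hμeq; exact hμeq.symm ▸ rfl)
    have h2 := congrArg Prod.snd this
    simp only at h2
    exact absurd h2 (by decide)
  -- range of Φ is the closure
  have hrange : Φ.range = Subgroup.closure {ζ, η, μ} := by
    apply le_antisymm
    · rintro x ⟨⟨d, s⟩, rfl⟩
      have hζm : ζ ∈ Subgroup.closure {ζ, η, μ} := Subgroup.subset_closure (by simp)
      have hηm : η ∈ Subgroup.closure {ζ, η, μ} := Subgroup.subset_closure (by simp)
      have hμm : μ ∈ Subgroup.closure {ζ, η, μ} := Subgroup.subset_closure (by simp)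
      rw [hΦa]
      apply Subgroup.mul_mem
      · rcases d with k | k
        · rw [hFr]; exact Subgroup.pow_mem _ hζm _
        · rw [hFsr]; exact Subgroup.mul_mem _ hηm (Subgroup.pow_mem _ hζm _)
      · exact Subgroup.pow_mem _ hμm _
    · rw [Subgroup.closure_le]
      rintro x hx
      simp only [Set.mem_insert_iff, Set.mem_singleton_iff] at hx
      rcases hx with rfl | rfl | rfl
      · exact ⟨(.r 1, 1), hζeq⟩
      · exact ⟨(.sr 0, 1), hηeq⟩
      · exact ⟨(.r 0, Multiplicative.ofAdd 1), hμeq⟩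
  refine ⟨hcζ, hcη, orderOf_eq_prime hμ2 hμ1, hnotin,
    ⟨(MulEquiv.subgroupCongr hrange.symm).trans (MonoidHom.ofInjective hinj).symm⟩⟩
end

section
/- Under the embedding ι_B: A[B_{n+1}] → A[A_{n+1}] sending r_i ↦ s_i' (1 ≤ i ≤ n) and r_{n+1} ↦ (s_{n+1}')², the Garside element Δ[B_{n+1}] = (r_1 ⋯ r_{n+1})^{n+1} maps to Δ[A_{n+1}]², the square of the Garside element of the braid group A[A_{n+1}]. -/
namespace Stmt13

variable {G : Type*} [Group G]

/-- `s a * s (a+1) * ⋯ * s (a+l-1)` -/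
def ascL (s : ℕ → G) (a : ℕ) : ℕ → G
  | 0 => 1
  | l + 1 => ascL s a l * s (a + l)

/-- `s (a+l-1) * ⋯ * s (a+1) * s a` -/
def descL (s : ℕ → G) (a : ℕ) : ℕ → G
  | 0 => 1
  | l + 1 => s (a + l) * descL s a l

/-- `asc o (o+k-1) * asc o (o+k-2) * ⋯ * asc o o` -/
def DeltaL (s : ℕ → G) (o : ℕ) : ℕ → G
  | 0 => 1
  | k + 1 => ascL s o (k + 1) * DeltaL s o k

variable (s : ℕ → G)

@[simp] lemma ascL_zero (a : ℕ) : ascL s a 0 = 1 := rfl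
@[simp] lemma descL_zero (a : ℕ) : descL s a 0 = 1 := rfl
@[simp] lemma DeltaL_zero (o : ℕ) : DeltaL s o 0 = 1 := rfl
lemma ascL_succ (a l : ℕ) : ascL s a (l + 1) = ascL s a l * s (a + l) := rfl
lemma descL_succ (a l : ℕ) : descL s a (l + 1) = s (a + l) * descL s a l := rfl
lemma DeltaL_succ (o k : ℕ) : DeltaL s o (k + 1) = ascL s o (k + 1) * DeltaL s o k := rfl
@[simp] lemma ascL_one (a : ℕ) : ascL s a 1 = s a := by simp [ascL]
@[simp] lemma descL_one (a : ℕ) : descL s a 1 = s a := by simp [descL]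

lemma descL_succ' (a l : ℕ) : descL s a (l + 1) = descL s (a + 1) l * s a := by
  induction l generalizing a with
  | zero => simp
  | succ l ih =>
    rw [descL_succ, ih a, descL_succ, show a + 1 + l = a + (l + 1) by omega, mul_assoc]

lemma ascL_add (a l1 : ℕ) : ∀ l2, ascL s a (l1 + l2) = ascL s a l1 * ascL s (a + l1) l2
  | 0 => by simp
  | l2 + 1 => by
    rw [show l1 + (l2 + 1) = (l1 + l2) + 1 by omega, ascL_succ, ascL_add a l1 l2, ascL_succ,
      mul_assoc, show a + (l1 + l2) = a + l1 + l2 by omega]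

lemma commute_ascL {x : G} (a : ℕ) : ∀ l, (∀ i, a ≤ i → i < a + l → Commute x (s i)) →
    Commute x (ascL s a l)
  | 0, _ => by simp
  | l + 1, h => by
    rw [ascL_succ]
    exact (commute_ascL a l fun i h1 h2 => h i h1 (by omega)).mul_right
      (h (a + l) (by omega) (by omega))

lemma commute_descL {x : G} (a : ℕ) : ∀ l, (∀ i, a ≤ i → i < a + l → Commute x (s i)) →
    Commute x (descL s a l)
  | 0, _ => by simp
  | l + 1, h => by
    rw [descL_succ]
    exact (h (a + l) (by omega) (by omega)).mul_right
      (commute_descL a l fun i h1 h2 => h i h1 (by omega))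

section Rels

variable (m : ℕ)
  (hb : ∀ i, 1 ≤ i → i + 1 ≤ m → s i * (s (i + 1) * s i) = s (i + 1) * (s i * s (i + 1)))
  (hc : ∀ i j, 1 ≤ i → i + 2 ≤ j → j ≤ m → s i * s j = s j * s i)

include hb hc in
/-- Shift relation: `c_b * s i = s (i+1) * c_b`. -/
lemma shiftB (b i : ℕ) (h1 : 1 ≤ i) (h2 : i + 1 ≤ b) (h3 : b ≤ m) :
    ascL s 1 b * s i = s (i + 1) * ascL s 1 b := by
  obtain ⟨j, rfl⟩ : ∃ j, i = j + 1 := ⟨i - 1, by omega⟩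
  obtain ⟨r, rfl⟩ : ∃ r, b = (j + 2) + r := ⟨b - (j + 2), by omega⟩
  have e1 : ascL s 1 (j + 2) * s (j + 1) = s (j + 2) * ascL s 1 (j + 2) := by
    have h12 : ascL s 1 (j + 2) = ascL s 1 j * (s (j + 1) * s (j + 2)) := by
      rw [ascL_succ, ascL_succ, mul_assoc, show 1 + j = j + 1 by omega,
        show 1 + (j + 1) = j + 2 by omega]
    have hbr := hb (j + 1) (by omega) (by omega)
    rw [show j + 1 + 1 = j + 2 by omega] at hbr
    have hcm : Commute (s (j + 2)) (ascL s 1 j) :=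
      commute_ascL s 1 j (fun i hi1 hi2 => (hc i (j + 2) (by omega) (by omega) (by omega)).symm)
    rw [h12]
    simp only [mul_assoc]
    rw [hbr, ← mul_assoc, ← hcm.eq, mul_assoc]
  have hcm2 : Commute (s (j + 1)) (ascL s (j + 3) r) :=
    commute_ascL s (j + 3) r (fun i hi1 hi2 => hc (j + 1) i (by omega) (by omega) (by omega))
  calc ascL s 1 (j + 2 + r) * s (j + 1)
      = ascL s 1 (j + 2) * (ascL s (j + 3) r * s (j + 1)) := by
        rw [ascL_add s 1 (j + 2) r, show 1 + (j + 2) = j + 3 by omega, mul_assoc]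
    _ = ascL s 1 (j + 2) * s (j + 1) * ascL s (j + 3) r := by
        rw [← hcm2.eq, ← mul_assoc]
    _ = s (j + 2) * (ascL s 1 (j + 2) * ascL s (j + 3) r) := by rw [e1, mul_assoc]
    _ = s (j + 1 + 1) * ascL s 1 (j + 2 + r) := by
        rw [show j + 1 + 1 = j + 2 by omega, ascL_add s 1 (j + 2) r,
          show 1 + (j + 2) = j + 3 by omega]

include hb hc in
lemma ascCB (b : ℕ) (hbm : b ≤ m) :
    ∀ l a', a' + 2 + l ≤ b + 1 →
      ascL s (a' + 2) l * ascL s 1 b = ascL s 1 b * ascL s (a' + 1) l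
  | 0, a', _ => by simp
  | l + 1, a', h => by
    have hs := shiftB s m hb hc b (a' + 1 + l) (by omega) (by omega) hbm
    rw [show a' + 1 + l + 1 = a' + 2 + l by omega] at hs
    rw [ascL_succ, mul_assoc, ← hs, ← mul_assoc, ascCB b hbm l a' (by omega), mul_assoc,
      ← ascL_succ]

include hb hc in
lemma descCB (b : ℕ) (hbm : b ≤ m) :
    ∀ l a', a' + 2 + l ≤ b + 1 →
      descL s (a' + 2) l * ascL s 1 b = ascL s 1 b * descL s (a' + 1) l
  | 0, a', _ => by simp
  | l + 1, a', h => by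
    have hs := shiftB s m hb hc b (a' + 1 + l) (by omega) (by omega) hbm
    rw [show a' + 1 + l + 1 = a' + 2 + l by omega] at hs
    rw [descL_succ, mul_assoc, descCB b hbm l a' (by omega), ← mul_assoc, ← hs, mul_assoc,
      ← descL_succ]

include hc in
lemma L1 (o t lw : ℕ) (ho : 1 ≤ o) (hm : o + t + lw ≤ m) :
    descL s (o + t + 1) lw * ascL s o (t + 1) = ascL s o t * descL s (o + t) (lw + 1) := by
  have hcm : Commute (ascL s o t) (descL s (o + t + 1) lw) := by
    apply commute_descL
    intro j hj1 hj2
    exact (commute_ascL s o t (fun i hi1 hi2 =>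
      (hc i j (by omega) (by omega) (by omega)).symm)).symm
  rw [ascL_succ, ← mul_assoc, ← hcm.eq, mul_assoc, ← descL_succ']

include hc in
lemma Tg (o : ℕ) (ho : 1 ≤ o) : ∀ t lw, o + t + 1 + lw ≤ m + 1 →
    descL s (o + t + 1) lw * DeltaL s o (t + 1) = DeltaL s o t * descL s o (lw + t + 1)
  | 0, lw, h => by
    simp only [DeltaL_succ, DeltaL_zero, mul_one, one_mul, zero_add, ascL_one]
    rw [show o + 0 + 1 = o + 1 by omega, show lw + 0 + 1 = lw + 1 by omega,
      descL_succ' s o lw]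
  | t + 1, lw, h => by
    have l1 := L1 s m hc o (t + 1) lw ho (by omega)
    have ih := Tg o ho t (lw + 1) (by omega)
    rw [DeltaL_succ s o (t + 1), ← mul_assoc, l1, mul_assoc,
      show o + (t + 1) = o + t + 1 by omega, ih, ← mul_assoc, ← DeltaL_succ s o t,
      show lw + 1 + t + 1 = lw + (t + 1) + 1 by omega]

include hc in
lemma Eg (o : ℕ) (ho : 1 ≤ o) : ∀ k, o + k ≤ m →
    DeltaL s o (k + 1) = DeltaL s o k * descL s o (k + 1)
  | 0, h => by rw [DeltaL_succ, DeltaL_zero, mul_one, one_mul, ascL_one, descL_one]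
  | t + 1, h => by
    have tg := Tg s m hc o ho t 1 (by omega)
    rw [DeltaL_succ s o (t + 1), ascL_succ, show o + (t + 1) = o + t + 1 by omega,
      ← descL_one s (o + t + 1), mul_assoc, tg, ← mul_assoc, ← DeltaL_succ s o t,
      show 1 + t + 1 = t + 1 + 1 by omega]

include hb hc in
lemma Zp (k : ℕ) (hk : k + 1 ≤ m) : ∀ j, j + 1 ≤ k →
    (ascL s 1 (k + 1)) ^ (j + 1) = (ascL s 1 k) ^ (j + 1) * descL s (k + 1 - j) (j + 1)
  | 0, h => by
    rw [pow_one, pow_one, ascL_succ, show 1 + k = k + 1 by omega,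
      show k + 1 - 0 = k + 1 by omega, descL_one]
  | j + 1, h => by
    have hd := descCB s m hb hc (k + 1) hk (j + 1) (k - 1 - j) (by omega)
    rw [show k - 1 - j + 2 = k + 1 - j by omega, show k - 1 - j + 1 = k - j by omega] at hd
    rw [pow_succ, Zp k hk j (by omega), mul_assoc, hd, ascL_succ, show 1 + k = k + 1 by omega,
      ← mul_assoc, ← mul_assoc, ← pow_succ, mul_assoc,
      show k + 1 - (j + 1) = k - j by omega, descL_succ s (k - j) (j + 1),
      show k - j + (j + 1) = k + 1 by omega]

include hb hc in
lemma Sg : ∀ k, k + 1 ≤ m →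
    DeltaL s 1 k * DeltaL s 2 k = (ascL s 1 (k + 1)) ^ k
  | 0, _ => by simp
  | t + 1, h => by
    have hz := Zp s m hb hc (t + 1) (by omega) t (by omega)
    rw [show t + 1 + 1 - t = 2 by omega] at hz
    rw [DeltaL_succ s 1 t, Eg s m hc 2 (by omega) t (by omega),
      mul_assoc (ascL s 1 (t + 1)), ← mul_assoc (DeltaL s 1 t), Sg t (by omega),
      ← mul_assoc, ← pow_succ', hz]

include hb hc in
lemma Dshift : ∀ k, k + 1 ≤ m →
    ascL s 1 m * DeltaL s 1 k = DeltaL s 2 k * ascL s 1 m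
  | 0, _ => by simp
  | t + 1, h => by
    have ha := ascCB s m hb hc m le_rfl (t + 1) 0 (by omega)
    rw [show 0 + 2 = 2 by omega, show 0 + 1 = 1 by omega] at ha
    rw [DeltaL_succ, ← mul_assoc, ← ha, mul_assoc, Dshift t (by omega), ← mul_assoc,
      ← DeltaL_succ]

include hb hc in
lemma main1 (hm : 1 ≤ m) : (DeltaL s 1 m) ^ 2 = (ascL s 1 m) ^ (m + 1) := by
  obtain ⟨t, rfl⟩ : ∃ t, m = t + 1 := ⟨m - 1, by omega⟩
  have hd := Dshift s (t + 1) hb hc t (by omega)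
  rw [pow_two, DeltaL_succ s 1 t]
  nth_rewrite 2 [hd]
  rw [mul_assoc, ← mul_assoc (DeltaL s 1 t), Sg s (t + 1) hb hc t (by omega),
    ← mul_assoc, ← pow_succ', ← pow_succ]

include hb hc in
lemma main2 (hm : 1 ≤ m) : (ascL s 1 m * s m) ^ m = (ascL s 1 m) ^ (m + 1) := by
  have claim : ∀ k' d, k' + 1 + d = m →
      (ascL s 1 m * s m) ^ (k' + 1) = (ascL s 1 m) ^ (k' + 1) * ascL s (d + 1) (k' + 1) := by
    intro k'
    induction k' with
    | zero =>
      intro d hd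
      rw [pow_one, pow_one, ascL_succ, ascL_zero, one_mul, show d + 1 + 0 = d + 1 by omega,
        show d + 1 = m by omega]
    | succ k ih =>
      intro d hd
      have ha := ascCB s m hb hc m le_rfl (k + 1) d (by omega)
      rw [pow_succ, ih (d + 1) (by omega), mul_assoc, ← mul_assoc (ascL s (d + 1 + 1) (k + 1)),
        show d + 1 + 1 = d + 2 by omega, ha, ← mul_assoc, ← mul_assoc, ← pow_succ,
        mul_assoc, ascL_succ s (d + 1) (k + 1), show d + 1 + (k + 1) = m by omega]
  obtain ⟨t, rfl⟩ : ∃ t, m = t + 1 := ⟨m - 1, by omega⟩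
  have := claim t 0 (by omega)
  rw [show 0 + 1 = 1 by omega] at this
  rw [this, ← pow_succ]

end Rels


lemma presented_rel {α : Type*} {rels : Set (FreeGroup α)} {w : FreeGroup α} (h : w ∈ rels) :
    PresentedGroup.mk rels w = 1 :=
  (QuotientGroup.eq_one_iff w).mpr (Subgroup.subset_normalClosure h)

lemma sA_of (n i : ℕ) (h1 : 1 ≤ i) (j : Fin n) (hj : (j : ℕ) + 1 = i) :
    sA n i = PresentedGroup.mk (ArtinARels n) (FreeGroup.of j) := by
  have hi : i - 1 < n := by omega
  show (if h : i - 1 < n then (PresentedGroup.of ⟨i - 1, h⟩ : ArtinA n) else 1) = _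
  rw [dif_pos hi]
  have hji : (⟨i - 1, hi⟩ : Fin n) = j := by ext; simp; omega
  rw [hji]; rfl

lemma sA_braid (n i : ℕ) (h1 : 1 ≤ i) (h2 : i + 1 ≤ n) :
    sA n i * (sA n (i + 1) * sA n i) = sA n (i + 1) * (sA n i * sA n (i + 1)) := by
  have hi : i - 1 < n := by omega
  have hj : i < n := by omega
  have hw : (FreeGroup.of ⟨i - 1, hi⟩ * FreeGroup.of ⟨i, hj⟩ * FreeGroup.of ⟨i - 1, hi⟩ *
      (FreeGroup.of ⟨i, hj⟩ * FreeGroup.of ⟨i - 1, hi⟩ * FreeGroup.of ⟨i, hj⟩)⁻¹)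
      ∈ ArtinARels n :=
    ⟨⟨i - 1, hi⟩, ⟨i, hj⟩, Or.inl ⟨by show i = i - 1 + 1; omega, rfl⟩⟩
  have h0 := presented_rel hw
  rw [map_mul, map_mul, map_inv, map_mul, map_mul, mul_inv_eq_one] at h0
  rw [sA_of n i h1 ⟨i - 1, hi⟩ (by show i - 1 + 1 = i; omega),
    sA_of n (i + 1) (by omega) ⟨i, hj⟩ rfl]
  simp only [mul_assoc] at h0
  exact h0

lemma sA_comm (n i j : ℕ) (h1 : 1 ≤ i) (h2 : i + 2 ≤ j) (h3 : j ≤ n) :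
    sA n i * sA n j = sA n j * sA n i := by
  have hi : i - 1 < n := by omega
  have hj : j - 1 < n := by omega
  have hw : (FreeGroup.of ⟨i - 1, hi⟩ * FreeGroup.of ⟨j - 1, hj⟩ *
      (FreeGroup.of ⟨j - 1, hj⟩ * FreeGroup.of ⟨i - 1, hi⟩)⁻¹) ∈ ArtinARels n :=
    ⟨⟨i - 1, hi⟩, ⟨j - 1, hj⟩, Or.inr ⟨by show i - 1 + 1 < j - 1; omega, rfl⟩⟩
  have h0 := presented_rel hw
  rw [map_mul, map_inv, map_mul, mul_inv_eq_one] at h0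
  rw [sA_of n i h1 ⟨i - 1, hi⟩ (by show i - 1 + 1 = i; omega),
    sA_of n j (by omega) ⟨j - 1, hj⟩ (by show j - 1 + 1 = j; omega)]
  exact h0

variable {G : Type*} [Group G] in
lemma prod_range_map (s : ℕ → G) :
    ∀ l, ((List.range l).map (fun k => s (k + 1))).prod = ascL s 1 l
  | 0 => by simp
  | l + 1 => by
    rw [List.range_succ, List.map_append, List.prod_append, prod_range_map s l]
    simp [ascL_succ, Nat.add_comm 1 l]

variable {G : Type*} [Group G] in
lemma prod_range_rev (s : ℕ → G) :
    ∀ k, (((List.range k).reverse).map (fun j => ascL s 1 (j + 1))).prod = DeltaL s 1 k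
  | 0 => by simp
  | k + 1 => by
    rw [List.range_succ, List.reverse_append, List.reverse_singleton, List.singleton_append,
      List.map_cons, List.prod_cons, prod_range_rev s k, ← DeltaL_succ]

lemma deltaA_eq (n : ℕ) : deltaA n = DeltaL (sA n) 1 n := by
  show ((List.range n).reverse.map
    (fun k => ((List.range (k + 1)).map (fun i => sA n (i + 1))).prod)).prod = _
  rw [show (fun k => ((List.range (k + 1)).map (fun i => sA n (i + 1))).prod)
      = (fun k => ascL (sA n) 1 (k + 1)) from
    funext fun k => prod_range_map (sA n) (k + 1)]
  exact prod_range_rev (sA n) n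

end Stmt13

open Stmt13 in
/-- Under the embedding `ι_B : A[B (n+1)] → A[A (n+1)]` with `r_i ↦ s_i'`
(`1 ≤ i ≤ n`) and `r_{n+1} ↦ (s_{n+1}')²`, the Garside element
`Δ[B (n+1)] = (r₁ ⋯ r_{n+1})^{n+1}` maps to `Δ[A (n+1)]²`. -/
theorem stmt13 (n : ℕ) (hn : 1 ≤ n)
    (φ : ArtinB (n + 1) →* ArtinA (n + 1))
    (hφ : ∀ i : ℕ, 1 ≤ i → i ≤ n → φ (rB (n + 1) i) = sA (n + 1) i)
    (hφ' : φ (rB (n + 1) (n + 1)) = sA (n + 1) (n + 1) ^ 2) :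
    φ (rhoB n ^ (n + 1)) = deltaA (n + 1) ^ 2 := by
  have hb : ∀ i, 1 ≤ i → i + 1 ≤ n + 1 →
      sA (n + 1) i * (sA (n + 1) (i + 1) * sA (n + 1) i)
        = sA (n + 1) (i + 1) * (sA (n + 1) i * sA (n + 1) (i + 1)) :=
    fun i u v => sA_braid (n + 1) i u v
  have hc : ∀ i j, 1 ≤ i → i + 2 ≤ j → j ≤ n + 1 →
      sA (n + 1) i * sA (n + 1) j = sA (n + 1) j * sA (n + 1) i :=
    fun i j u v w => sA_comm (n + 1) i j u v w
  have hρ : φ (rhoB n) = ascL (sA (n + 1)) 1 (n + 1) * sA (n + 1) (n + 1) := by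
    rw [rhoB, map_list_prod, List.map_map, List.range_succ, List.map_append, List.prod_append]
    have hmap : (List.range n).map (φ ∘ fun k => rB (n + 1) (k + 1))
        = (List.range n).map (fun k => sA (n + 1) (k + 1)) := by
      apply List.map_congr_left
      intro k hk
      have hk' : k < n := List.mem_range.mp hk
      exact hφ (k + 1) (by omega) (by omega)
    rw [hmap, prod_range_map]
    simp only [List.map_cons, List.map_nil, List.prod_cons, List.prod_nil, mul_one,
      Function.comp_apply]
    rw [hφ', pow_two, ← mul_assoc, ascL_succ, show 1 + n = n + 1 by omega]
  have hm1 := main1 (sA (n + 1)) (n + 1) hb hc (by omega)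
  have hm2 := main2 (sA (n + 1)) (n + 1) hb hc (by omega)
  rw [map_pow, hρ, hm2, ← hm1, deltaA_eq]
end

section
/- Let n ≥ 4. For each p ∈ Z, the assignment t_i ↦ t_i Δ_Y^{2p} for 1 ≤ i ≤ n and t_0 ↦ v_0 Δ_Y^{2p} extends to a well-defined group endomorphism α_p of A[Ã_n], where Y = {t_1, ..., t_n}, Δ_Y is the Garside element of the standard parabolic subgroup A_Y ≅ A[A_n], and v_0 = t_1 ⋯ t_{n-1} t_n t_{n-1}^{-1} ⋯ t_1^{-1}. -/
/-- `t₁ t₂ ⋯ t_{n-1}` in `A[Ã n]`. -/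
def wpos (n : ℕ) : ArtinAffineA n :=
  ((List.range (n - 1)).map (fun k => tA n ((k + 1 : ℕ) : ZMod (n + 1)))).prod

/-- `t₁⁻¹ t₂⁻¹ ⋯ t_{n-1}⁻¹` in `A[Ã n]`. -/
def wneg (n : ℕ) : ArtinAffineA n :=
  ((List.range (n - 1)).map (fun k => (tA n ((k + 1 : ℕ) : ZMod (n + 1)))⁻¹)).prod

/-- `v₀ = t₁ ⋯ t_{n-1} tₙ t_{n-1}⁻¹ ⋯ t₁⁻¹` in `A[Ã n]`. -/
def vZero (n : ℕ) : ArtinAffineA n :=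
  wpos n * tA n ((n : ℕ) : ZMod (n + 1)) * (wpos n)⁻¹

/-- `v₁ = t₁⁻¹ ⋯ t_{n-1}⁻¹ tₙ t_{n-1} ⋯ t₁` in `A[Ã n]`. -/
def vOne (n : ℕ) : ArtinAffineA n :=
  wneg n * tA n ((n : ℕ) : ZMod (n + 1)) * (wneg n)⁻¹

/-- The Garside element `Δ_Y` of the standard parabolic subgroup of `A[Ã n]`
generated by `Y = {t₁, …, tₙ}` (which is isomorphic to `A[A n]`). -/
def deltaY (n : ℕ) : ArtinAffineA n :=
  ((List.range n).reverse.map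
    (fun k => ((List.range (k + 1)).map
      (fun i => tA n ((i + 1 : ℕ) : ZMod (n + 1)))).prod)).prod

namespace Stmt15

variable (n : ℕ)

lemma rel_one {r : FreeGroup (ZMod (n+1))} (h : r ∈ ArtinAffineARels n) :
    (PresentedGroup.mk (ArtinAffineARels n) r : ArtinAffineA n) = 1 := by
  show (QuotientGroup.mk r : PresentedGroup (ArtinAffineARels n)) = 1
  rw [QuotientGroup.eq_one_iff]
  exact Subgroup.subset_normalClosure h

lemma braidZ (a : ZMod (n+1)) :
    tA n a * tA n (a+1) * tA n a = tA n (a+1) * tA n a * tA n (a+1) := by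
  have h := rel_one n (r := FreeGroup.of a * FreeGroup.of (a+1) * FreeGroup.of a *
      (FreeGroup.of (a+1) * FreeGroup.of a * FreeGroup.of (a+1))⁻¹)
    ⟨a, a+1, Or.inl ⟨rfl, rfl⟩⟩
  simp only [map_mul, map_inv] at h
  rw [mul_inv_eq_one] at h
  exact h

lemma commZ {a b : ZMod (n+1)} (h1 : a ≠ b) (h2 : b ≠ a+1) (h3 : a ≠ b+1) :
    Commute (tA n a) (tA n b) := by
  have h := rel_one n (r := FreeGroup.of a * FreeGroup.of b *
      (FreeGroup.of b * FreeGroup.of a)⁻¹)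
    ⟨a, b, Or.inr ⟨h1, h2, h3, rfl⟩⟩
  simp only [map_mul, map_inv] at h
  rw [mul_inv_eq_one] at h
  exact h

/-- `s n i` is the generator `t_i` for a natural index. -/
abbrev s (i : ℕ) : ArtinAffineA n := tA n ((i : ℕ) : ZMod (n+1))

lemma cast_ne {i j : ℕ} (hi : i < n+1) (hj : j < n+1) (h : i ≠ j) :
    ((i : ℕ) : ZMod (n+1)) ≠ ((j : ℕ) : ZMod (n+1)) := fun e => h (by
  have := congrArg ZMod.val e
  rwa [ZMod.val_natCast_of_lt hi, ZMod.val_natCast_of_lt hj] at this)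

lemma cast_add_one (i : ℕ) : ((i : ℕ) : ZMod (n+1)) + 1 = ((i+1 : ℕ) : ZMod (n+1)) := by
  push_cast; ring

lemma braidN (i : ℕ) : s n i * s n (i+1) * s n i = s n (i+1) * s n i * s n (i+1) := by
  have h := braidZ n ((i : ℕ) : ZMod (n+1))
  rwa [cast_add_one] at h

lemma commN (i j : ℕ) (h1 : 1 ≤ i) (h2 : i + 2 ≤ j) (h3 : j ≤ n) :
    Commute (s n i) (s n j) := by
  apply commZ
  · exact cast_ne n (by omega) (by omega) (by omega)
  · rw [cast_add_one]; exact cast_ne n (by omega) (by omega) (by omega)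
  · rw [cast_add_one]
    rcases Nat.lt_or_ge j n with hj | hj
    · exact cast_ne n (by omega) (by omega) (by omega)
    · rw [show ((j+1 : ℕ) : ZMod (n+1)) = ((0 : ℕ) : ZMod (n+1)) by
        rw [show j = n from by omega]; simp]
      exact cast_ne n (by omega) (by omega) (by omega)


/-- `seg n a b = s_a s_{a+1} ⋯ s_b` (for `1 ≤ a`), `1` if `b < a`. -/
def seg (a : ℕ) : ℕ → ArtinAffineA n
  | 0 => 1
  | b + 1 => if b + 1 < a then 1 else seg a b * s n (b + 1)

/-- `rseg n a b = s_b s_{b-1} ⋯ s_a` (for `1 ≤ a`), `1` if `b < a`. -/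
def rseg (a : ℕ) : ℕ → ArtinAffineA n
  | 0 => 1
  | b + 1 => if b + 1 < a then 1 else s n (b + 1) * rseg a b

/-- `DD n m = c_m c_{m-1} ⋯ c_1` where `c_k = s_1 ⋯ s_k`. -/
def DD : ℕ → ArtinAffineA n
  | 0 => 1
  | m + 1 => seg n 1 (m + 1) * DD m

lemma seg_of_lt {a b : ℕ} (h : b < a) : seg n a b = 1 := by
  cases b with
  | zero => rfl
  | succ b => rw [seg, if_pos h]

lemma seg_succ {a b : ℕ} (h : a ≤ b + 1) : seg n a (b+1) = seg n a b * s n (b+1) := by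
  rw [seg, if_neg (by omega)]

lemma rseg_of_lt {a b : ℕ} (h : b < a) : rseg n a b = 1 := by
  cases b with
  | zero => rfl
  | succ b => rw [rseg, if_pos h]

lemma rseg_succ {a b : ℕ} (h : a ≤ b + 1) : rseg n a (b+1) = s n (b+1) * rseg n a b := by
  rw [rseg, if_neg (by omega)]

lemma seg_self {a : ℕ} (ha : 1 ≤ a) : seg n a a = s n a := by
  obtain ⟨a', rfl⟩ : ∃ a', a = a' + 1 := ⟨a - 1, by omega⟩
  rw [seg_succ n le_rfl, seg_of_lt n (by omega), one_mul]

lemma rseg_self {a : ℕ} (ha : 1 ≤ a) : rseg n a a = s n a := by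
  obtain ⟨a', rfl⟩ : ∃ a', a = a' + 1 := ⟨a - 1, by omega⟩
  rw [rseg_succ n le_rfl, rseg_of_lt n (by omega), mul_one]

lemma seg_split {a b : ℕ} (h1 : a ≤ b + 1) :
    ∀ c, b ≤ c → seg n a c = seg n a b * seg n (b+1) c := by
  intro c hc
  induction c, hc using Nat.le_induction with
  | base => rw [seg_of_lt n (show b < b + 1 by omega), mul_one]
  | succ c hc ih =>
    rw [seg_succ n (show a ≤ c + 1 by omega), ih,
      seg_succ n (show b + 1 ≤ c + 1 by omega), mul_assoc]

lemma rseg_split {a b : ℕ} (h1 : a ≤ b + 1) :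
    ∀ c, b ≤ c → rseg n a c = rseg n (b+1) c * rseg n a b := by
  intro c hc
  induction c, hc using Nat.le_induction with
  | base => rw [rseg_of_lt n (show b < b + 1 by omega), one_mul]
  | succ c hc ih =>
    rw [rseg_succ n (show a ≤ c + 1 by omega), ih,
      rseg_succ n (show b + 1 ≤ c + 1 by omega), mul_assoc]

lemma seg_succ_left {a b : ℕ} (ha : 1 ≤ a) (hab : a ≤ b) :
    seg n a b = s n a * seg n (a+1) b := by
  rw [seg_split n (a := a) (b := a) (by omega) b hab, seg_self n ha]

lemma comm_seg {g : ArtinAffineA n} {a b : ℕ} (ha : 1 ≤ a)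
    (H : ∀ k, a ≤ k → k ≤ b → Commute g (s n k)) : Commute g (seg n a b) := by
  induction b with
  | zero => rw [seg_of_lt n (by omega)]; exact Commute.one_right g
  | succ b ih =>
    by_cases h : b + 1 < a
    · rw [seg_of_lt n h]; exact Commute.one_right g
    · rw [seg_succ n (by omega)]
      exact (ih fun k hk1 hk2 => H k hk1 (by omega)).mul_right (H (b+1) (by omega) le_rfl)

lemma comm_rseg {g : ArtinAffineA n} {a b : ℕ} (ha : 1 ≤ a)
    (H : ∀ k, a ≤ k → k ≤ b → Commute g (s n k)) : Commute g (rseg n a b) := by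
  induction b with
  | zero => rw [rseg_of_lt n (by omega)]; exact Commute.one_right g
  | succ b ih =>
    by_cases h : b + 1 < a
    · rw [rseg_of_lt n h]; exact Commute.one_right g
    · rw [rseg_succ n (by omega)]
      exact (H (b+1) (by omega) le_rfl).mul_right (ih fun k hk1 hk2 => H k hk1 (by omega))

lemma seg_conj (m i : ℕ) (h1 : 1 ≤ i) (h2 : i + 1 ≤ m) (hm : m ≤ n) :
    seg n 1 m * s n i = s n (i + 1) * seg n 1 m := by
  obtain ⟨j, rfl⟩ : ∃ j, i = j + 1 := ⟨i - 1, by omega⟩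
  have e1 : seg n 1 m = seg n 1 (j + 2) * seg n (j + 3) m :=
    seg_split n (by omega) m (by omega)
  have e2 : seg n 1 (j + 2) = seg n 1 j * s n (j + 1) * s n (j + 2) := by
    rw [seg_succ n (by omega), seg_succ n (by omega)]
  have c1 : Commute (seg n (j + 3) m) (s n (j + 1)) :=
    (comm_seg n (by omega) (fun k hk1 hk2 => commN n (j+1) k (by omega) (by omega) (by omega))).symm
  have c2 : Commute (s n (j + 2)) (seg n 1 j) :=
    comm_seg n (by omega) (fun k hk1 hk2 => (commN n k (j+2) hk1 (by omega) (by omega)).symm)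
  have hb := braidN n (j + 1)
  calc seg n 1 m * s n (j + 1)
      = seg n 1 (j + 2) * (seg n (j + 3) m * s n (j + 1)) := by rw [e1]; group
    _ = seg n 1 (j + 2) * (s n (j + 1) * seg n (j + 3) m) := by rw [c1.eq]
    _ = seg n 1 j * (s n (j + 1) * s n (j + 2) * s n (j + 1)) * seg n (j + 3) m := by
        rw [e2]; group
    _ = seg n 1 j * (s n (j + 2) * s n (j + 1) * s n (j + 2)) * seg n (j + 3) m := by
        rw [hb]
    _ = (s n (j + 2) * seg n 1 j) * (s n (j + 1) * s n (j + 2)) * seg n (j + 3) m := by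
        rw [c2.eq]; group
    _ = s n (j + 2) * seg n 1 m := by rw [e1, e2]; group

lemma rseg_conj (m i : ℕ) (h1 : 1 ≤ i) (h2 : i + 1 ≤ m) (hm : m ≤ n) :
    rseg n 1 m * s n (i + 1) = s n i * rseg n 1 m := by
  obtain ⟨j, rfl⟩ : ∃ j, i = j + 1 := ⟨i - 1, by omega⟩
  have e1 : rseg n 1 m = rseg n (j + 3) m * rseg n 1 (j + 2) :=
    rseg_split n (by omega) m (by omega)
  have e2 : rseg n 1 (j + 2) = s n (j + 2) * s n (j + 1) * rseg n 1 j := by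
    rw [rseg_succ n (by omega), rseg_succ n (by omega)]; group
  have c1 : Commute (rseg n (j + 3) m) (s n (j + 1)) :=
    (comm_rseg n (by omega) (fun k hk1 hk2 => commN n (j+1) k (by omega) (by omega) (by omega))).symm
  have c2 : Commute (rseg n 1 j) (s n (j + 2)) :=
    (comm_rseg n (by omega) (fun k hk1 hk2 => (commN n k (j+2) hk1 (by omega) (by omega)).symm)).symm
  have hb := braidN n (j + 1)
  calc rseg n 1 m * s n (j + 2)
      = rseg n (j + 3) m * (s n (j + 2) * s n (j + 1)) * (rseg n 1 j * s n (j + 2)) := by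
        rw [e1, e2]; group
    _ = rseg n (j + 3) m * (s n (j + 2) * s n (j + 1)) * (s n (j + 2) * rseg n 1 j) := by
        rw [c2.eq]
    _ = rseg n (j + 3) m * (s n (j + 2) * s n (j + 1) * s n (j + 2)) * rseg n 1 j := by
        group
    _ = rseg n (j + 3) m * (s n (j + 1) * s n (j + 2) * s n (j + 1)) * rseg n 1 j := by
        rw [hb]
    _ = (rseg n (j + 3) m * s n (j + 1)) * (s n (j + 2) * (s n (j + 1) * rseg n 1 j)) := by
        group
    _ = (s n (j + 1) * rseg n (j + 3) m) * (s n (j + 2) * (s n (j + 1) * rseg n 1 j)) := by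
        rw [c1.eq]
    _ = s n (j + 1) * rseg n 1 m := by rw [e1, e2]; group

lemma comm_DD {j : ℕ} : ∀ m, m + 2 ≤ j → j ≤ n → Commute (s n j) (DD n m) := by
  intro m
  induction m with
  | zero => intro _ _; exact Commute.one_right _
  | succ m ih =>
    intro h1 h2
    show Commute (s n j) (seg n 1 (m+1) * DD n m)
    exact (comm_seg n (by omega)
      (fun k hk1 hk2 => (commN n k j hk1 (by omega) h2).symm)).mul_right (ih (by omega) h2)

lemma DD_alt : ∀ m, m + 1 ≤ n → DD n (m + 1) = DD n m * rseg n 1 (m + 1) := by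
  intro m
  induction m with
  | zero =>
    intro _
    show seg n 1 1 * DD n 0 = DD n 0 * rseg n 1 1
    rw [seg_self n le_rfl, rseg_self n le_rfl]
    show s n 1 * 1 = 1 * s n 1
    rw [mul_one, one_mul]
  | succ m ih =>
    intro h
    have hc : Commute (s n (m+2)) (DD n m) := comm_DD n m le_rfl (by omega)
    have eDD : DD n (m+1) = seg n 1 (m+1) * DD n m := rfl
    calc DD n (m+2) = seg n 1 (m+2) * DD n (m+1) := rfl
      _ = seg n 1 (m+2) * (DD n m * rseg n 1 (m+1)) := by rw [ih (by omega)]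
      _ = seg n 1 (m+1) * (s n (m+2) * DD n m) * rseg n 1 (m+1) := by
          rw [show seg n 1 (m+2) = seg n 1 (m+1) * s n (m+2) from seg_succ n (by omega)]
          group
      _ = seg n 1 (m+1) * (DD n m * s n (m+2)) * rseg n 1 (m+1) := by rw [hc.eq]
      _ = (seg n 1 (m+1) * DD n m) * (s n (m+2) * rseg n 1 (m+1)) := by group
      _ = DD n (m+1) * rseg n 1 (m+2) := by
          rw [show rseg n 1 (m+2) = s n (m+2) * rseg n 1 (m+1) from rseg_succ n (by omega), eDD]

lemma DD_conj : ∀ m, m ≤ n → ∀ i, 1 ≤ i → i ≤ m → DD n m * s n i = s n (m + 1 - i) * DD n m := by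
  intro m
  induction m with
  | zero => intro _ i h1 h2; omega
  | succ m ih =>
    intro hm i h1 h2
    by_cases hi : i = 1
    · subst hi
      rw [show m + 1 + 1 - 1 = m + 1 from by omega]
      rcases Nat.eq_zero_or_pos m with rfl | hmpos
      · show seg n 1 1 * DD n 0 * s n 1 = s n 1 * (seg n 1 1 * DD n 0)
        rw [seg_self n le_rfl]
        show s n 1 * 1 * s n 1 = s n 1 * (s n 1 * 1)
        group
      · have eDD : DD n (m+1) = seg n 1 (m+1) * DD n m := rfl
        calc DD n (m+1) * s n 1 = seg n 1 (m+1) * (DD n m * s n 1) := by rw [eDD]; group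
          _ = seg n 1 (m+1) * (s n (m + 1 - 1) * DD n m) := by rw [ih (by omega) 1 le_rfl hmpos]
          _ = (seg n 1 (m+1) * s n m) * DD n m := by
              rw [show m + 1 - 1 = m from by omega]; group
          _ = (s n (m+1) * seg n 1 (m+1)) * DD n m := by
              rw [seg_conj n (m+1) m hmpos (by omega) hm]
          _ = s n (m+1) * DD n (m+1) := by rw [eDD]; group
    · obtain ⟨j, rfl⟩ : ∃ j, i = j + 2 := ⟨i - 2, by omega⟩
      have e1 : DD n (m+1) = DD n m * rseg n 1 (m+1) := DD_alt n m hm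
      calc DD n (m+1) * s n (j+2)
          = DD n m * (rseg n 1 (m+1) * s n (j+2)) := by rw [e1]; group
        _ = DD n m * (s n (j+1) * rseg n 1 (m+1)) := by
            rw [show rseg n 1 (m+1) * s n (j+2) = s n (j+1) * rseg n 1 (m+1) from
              rseg_conj n (m+1) (j+1) (by omega) (by omega) hm]
        _ = (DD n m * s n (j+1)) * rseg n 1 (m+1) := by group
        _ = (s n (m + 1 - (j+1)) * DD n m) * rseg n 1 (m+1) := by
            rw [ih (by omega) (j+1) (by omega) (by omega)]
        _ = s n (m + 1 + 1 - (j+2)) * DD n (m+1) := by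
            rw [show m + 1 - (j+1) = m + 1 + 1 - (j+2) from by omega, e1]; group

-- Bridges between list products and seg/DD
lemma listBridge : ∀ m, ((List.range m).map (fun k => tA n ((k + 1 : ℕ) : ZMod (n + 1)))).prod
    = seg n 1 m := by
  intro m
  induction m with
  | zero => rfl
  | succ m ih =>
    rw [List.range_succ, List.map_append, List.prod_append, ih, seg_succ n (by omega)]
    simp [s]

lemma wpos_eq : wpos n = seg n 1 (n - 1) := listBridge n (n - 1)

lemma deltaBridge : ∀ m, ((List.range m).reverse.map
    (fun k => ((List.range (k + 1)).map
      (fun i => tA n ((i + 1 : ℕ) : ZMod (n + 1)))).prod)).prod = DD n m := by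
  intro m
  induction m with
  | zero => rfl
  | succ m ih =>
    rw [show (List.range (m+1)).reverse = m :: (List.range m).reverse by
      rw [List.range_succ, List.reverse_append]; rfl]
    rw [List.map_cons, List.prod_cons, ih, listBridge n (m+1)]
    rfl

lemma deltaY_eq : deltaY n = DD n n := deltaBridge n n

lemma v0_eq : vZero n = seg n 1 (n - 1) * s n n * (seg n 1 (n - 1))⁻¹ := by
  rw [vZero, wpos_eq n]

-- conjugated braid relation
lemma conj_braid {G : Type*} [Group G] (x y : G) (h : x * y * x = y * x * y) :
    x * y * x⁻¹ = y⁻¹ * x * y := by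
  have key : y * (x * y * x⁻¹) * x = y * (y⁻¹ * x * y) * x := by
    rw [show y * (x * y * x⁻¹) * x = y * x * y * (x⁻¹ * x) from by group, ← h]
    group
  exact mul_left_cancel (mul_right_cancel key)

lemma helperA {G : Type*} [Group G] (a b : G) (h : a * b * a = b * a * b) :
    a * (b * a * b⁻¹) * a = (b * a * b⁻¹) * a * (b * a * b⁻¹) := by
  have r1 : a * (b * a * b⁻¹) * a = (a * b * a) * (b⁻¹ * a) := by group
  have r2 : (b * a * b⁻¹) * a * (b * a * b⁻¹) = b * a * (b⁻¹ * (a * b * a) * b⁻¹) := by group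
  rw [r1, r2, h]; group

lemma helperB {G : Type*} [Group G] (x y : G) (h : y * x * y = x * y * x) :
    (y⁻¹ * x * y) * x * (y⁻¹ * x * y) = x * (y⁻¹ * x * y) * x := by
  have r1 : (y⁻¹ * x * y) * x * (y⁻¹ * x * y) = y⁻¹ * (x * y * x) * (y⁻¹ * (x * y)) := by group
  have r2 : x * (y⁻¹ * x * y) * x = x * y⁻¹ * (x * y * x) := by group
  rw [r1, r2, ← h]; group

-- the band-generator identity
lemma band : ∀ d a, 1 ≤ a → a + d ≤ n →
    seg n a (a + d - 1) * s n (a + d) * (seg n a (a + d - 1))⁻¹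
      = (seg n (a + 1) (a + d))⁻¹ * s n a * seg n (a + 1) (a + d) := by
  intro d
  induction d with
  | zero =>
    intro a ha han
    rw [seg_of_lt n (show a + 0 - 1 < a by omega), seg_of_lt n (show a + 0 < a + 1 by omega)]
    simp
  | succ d ih =>
    intro a ha han
    have key := ih (a + 1) (by omega) (by omega)
    simp only [show a + 1 + d - 1 = a + d from by omega,
      show a + d + 1 - 1 = a + d from by omega, show a + 1 + d = a + d + 1 from by omega,
      show a + 1 + 1 = a + 2 from by omega] at key
    have e0 : seg n a (a + (d + 1) - 1) = s n a * seg n (a + 1) (a + d) := by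
      rw [show a + (d + 1) - 1 = a + d from by omega]
      exact seg_succ_left n ha (by omega)
    have c1 : Commute (s n a) (seg n (a + 2) (a + d + 1)) :=
      comm_seg n (by omega) (fun k hk1 hk2 => commN n a k ha (by omega) (by omega))
    have cb : s n a * s n (a + 1) * (s n a)⁻¹ = (s n (a + 1))⁻¹ * s n a * s n (a + 1) :=
      conj_braid _ _ (braidN n a)
    have e1 : seg n (a + 1) (a + (d + 1)) = s n (a + 1) * seg n (a + 2) (a + d + 1) := by
      rw [show a + (d + 1) = a + d + 1 from rfl]
      exact seg_succ_left n (by omega) (by omega)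
    calc seg n a (a + (d + 1) - 1) * s n (a + (d + 1)) * (seg n a (a + (d + 1) - 1))⁻¹
        = s n a * (seg n (a + 1) (a + d) * s n (a + d + 1) * (seg n (a + 1) (a + d))⁻¹)
            * (s n a)⁻¹ := by rw [e0]; group
      _ = s n a * ((seg n (a + 2) (a + d + 1))⁻¹ * s n (a + 1) * seg n (a + 2) (a + d + 1))
            * (s n a)⁻¹ := by rw [key]
      _ = (s n a * (seg n (a + 2) (a + d + 1))⁻¹) * s n (a + 1)
            * (seg n (a + 2) (a + d + 1) * (s n a)⁻¹) := by group
      _ = ((seg n (a + 2) (a + d + 1))⁻¹ * s n a) * s n (a + 1)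
            * ((s n a)⁻¹ * seg n (a + 2) (a + d + 1)) := by
          rw [c1.inv_right.eq, (c1.inv_left.eq).symm]
      _ = (seg n (a + 2) (a + d + 1))⁻¹ * (s n a * s n (a + 1) * (s n a)⁻¹)
            * seg n (a + 2) (a + d + 1) := by group
      _ = (seg n (a + 2) (a + d + 1))⁻¹ * ((s n (a + 1))⁻¹ * s n a * s n (a + 1))
            * seg n (a + 2) (a + d + 1) := by rw [cb]
      _ = (seg n (a + 1) (a + (d + 1)))⁻¹ * s n a * seg n (a + 1) (a + (d + 1)) := by
          rw [e1]; group

lemma v0_alt (hn : 4 ≤ n) : vZero n = (seg n 2 n)⁻¹ * s n 1 * seg n 2 n := by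
  have h := band n (n - 1) 1 le_rfl (by omega)
  simp only [show 1 + (n - 1) - 1 = n - 1 from by omega, show 1 + (n - 1) = n from by omega,
    show 1 + 1 = 2 from rfl] at h
  rw [v0_eq n, h]

lemma u1 (hn : 4 ≤ n) : seg n 2 n * s n 1 * (seg n 2 n)⁻¹ = s n 2 * s n 1 * (s n 2)⁻¹ := by
  have e : seg n 2 n = s n 2 * seg n 3 n := seg_succ_left n (by omega) (by omega)
  have c : Commute (s n 1) (seg n 3 n) :=
    comm_seg n (by omega) fun k hk1 hk2 => commN n 1 k le_rfl (by omega) hk2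
  calc seg n 2 n * s n 1 * (seg n 2 n)⁻¹
      = s n 2 * (seg n 3 n * s n 1) * ((seg n 3 n)⁻¹ * (s n 2)⁻¹) := by rw [e]; group
    _ = s n 2 * (s n 1 * seg n 3 n) * ((seg n 3 n)⁻¹ * (s n 2)⁻¹) := by rw [← c.eq]
    _ = s n 2 * s n 1 * (s n 2)⁻¹ := by group

lemma relA (hn : 4 ≤ n) : vZero n * s n 1 * vZero n = s n 1 * vZero n * s n 1 := by
  calc vZero n * s n 1 * vZero n
      = (seg n 2 n)⁻¹ * (s n 1 * (seg n 2 n * s n 1 * (seg n 2 n)⁻¹) * s n 1) * seg n 2 n := by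
        rw [v0_alt n hn]; group
    _ = (seg n 2 n)⁻¹ * (s n 1 * (s n 2 * s n 1 * (s n 2)⁻¹) * s n 1) * seg n 2 n := by
        rw [u1 n hn]
    _ = (seg n 2 n)⁻¹ * ((s n 2 * s n 1 * (s n 2)⁻¹) * s n 1 * (s n 2 * s n 1 * (s n 2)⁻¹))
          * seg n 2 n := by rw [helperA (s n 1) (s n 2) (braidN n 1)]
    _ = (seg n 2 n)⁻¹ * ((seg n 2 n * s n 1 * (seg n 2 n)⁻¹) * s n 1
          * (seg n 2 n * s n 1 * (seg n 2 n)⁻¹)) * seg n 2 n := by rw [u1 n hn]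
    _ = s n 1 * vZero n * s n 1 := by rw [v0_alt n hn]; group

lemma relB (hn : 4 ≤ n) : s n n * vZero n * s n n = vZero n * s n n * vZero n := by
  have hb : s n (n-1) * s n n * s n (n-1) = s n n * s n (n-1) * s n n := by
    have h := braidN n (n-1)
    rwa [show n - 1 + 1 = n from by omega] at h
  have e : seg n 1 (n-1) = seg n 1 (n-2) * s n (n-1) := by
    rw [show n - 1 = (n-2)+1 from by omega]
    exact seg_succ n (by omega)
  have c : Commute (s n n) (seg n 1 (n-2)) :=
    comm_seg n (by omega) fun k hk1 hk2 => (commN n k n hk1 (by omega) le_rfl).symm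
  have w1 : (seg n 1 (n-1))⁻¹ * s n n * seg n 1 (n-1) = (s n (n-1))⁻¹ * s n n * s n (n-1) := by
    calc (seg n 1 (n-1))⁻¹ * s n n * seg n 1 (n-1)
        = (s n (n-1))⁻¹ * ((seg n 1 (n-2))⁻¹ * (s n n * seg n 1 (n-2))) * s n (n-1) := by
          rw [e]; group
      _ = (s n (n-1))⁻¹ * ((seg n 1 (n-2))⁻¹ * (seg n 1 (n-2) * s n n)) * s n (n-1) := by
          rw [c.eq]
      _ = (s n (n-1))⁻¹ * s n n * s n (n-1) := by group
  calc s n n * vZero n * s n n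
      = seg n 1 (n-1) * (((seg n 1 (n-1))⁻¹ * s n n * seg n 1 (n-1)) * s n n
          * ((seg n 1 (n-1))⁻¹ * s n n * seg n 1 (n-1))) * (seg n 1 (n-1))⁻¹ := by
        rw [v0_eq n]; group
    _ = seg n 1 (n-1) * (((s n (n-1))⁻¹ * s n n * s n (n-1)) * s n n
          * ((s n (n-1))⁻¹ * s n n * s n (n-1))) * (seg n 1 (n-1))⁻¹ := by rw [w1]
    _ = seg n 1 (n-1) * (s n n * ((s n (n-1))⁻¹ * s n n * s n (n-1)) * s n n)
          * (seg n 1 (n-1))⁻¹ := by rw [helperB (s n n) (s n (n-1)) hb]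
    _ = seg n 1 (n-1) * (s n n * ((seg n 1 (n-1))⁻¹ * s n n * seg n 1 (n-1)) * s n n)
          * (seg n 1 (n-1))⁻¹ := by rw [w1]
    _ = vZero n * s n n * vZero n := by rw [v0_eq n]; group

lemma relC (hn : 4 ≤ n) (j : ℕ) (hj2 : 2 ≤ j) (hj3 : j ≤ n - 1) :
    vZero n * s n j = s n j * vZero n := by
  obtain ⟨k, rfl⟩ : ∃ k, j = k + 1 := ⟨j - 1, by omega⟩
  have hc : seg n 1 (n-1) * s n k = s n (k+1) * seg n 1 (n-1) :=
    seg_conj n (n-1) k (by omega) (by omega) (by omega)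
  have hj : s n (k+1) = seg n 1 (n-1) * s n k * (seg n 1 (n-1))⁻¹ := by rw [hc]; group
  have c : Commute (s n n) (s n k) := (commN n k n (by omega) (by omega) le_rfl).symm
  calc vZero n * s n (k+1)
      = seg n 1 (n-1) * (s n n * s n k) * (seg n 1 (n-1))⁻¹ := by rw [v0_eq n, hj]; group
    _ = seg n 1 (n-1) * (s n k * s n n) * (seg n 1 (n-1))⁻¹ := by rw [c.eq]
    _ = s n (k+1) * vZero n := by rw [v0_eq n, hj]; group

lemma delta_conj (i : ℕ) (h1 : 1 ≤ i) (h2 : i ≤ n) :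
    deltaY n * s n i = s n (n + 1 - i) * deltaY n := by
  rw [deltaY_eq n]; exact DD_conj n n le_rfl i h1 h2

lemma comm_delta_sq (i : ℕ) (h1 : 1 ≤ i) (h2 : i ≤ n) :
    Commute (s n i) (deltaY n * deltaY n) := by
  have ha := delta_conj n i h1 h2
  have hb := delta_conj n (n+1-i) (by omega) (by omega)
  rw [show n + 1 - (n + 1 - i) = i from by omega] at hb
  have key : deltaY n * deltaY n * s n i = s n i * (deltaY n * deltaY n) := by
    calc deltaY n * deltaY n * s n i = deltaY n * (deltaY n * s n i) := by group
      _ = deltaY n * (s n (n+1-i) * deltaY n) := by rw [ha]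
      _ = (deltaY n * s n (n+1-i)) * deltaY n := by group
      _ = (s n i * deltaY n) * deltaY n := by rw [hb]
      _ = s n i * (deltaY n * deltaY n) := by group
  exact key.symm

def gg (a : ZMod (n+1)) : ArtinAffineA n := if a = 0 then vZero n else tA n a

lemma gg_zero : gg n 0 = vZero n := if_pos rfl

lemma gg_cast (i : ℕ) (h1 : 1 ≤ i) (h2 : i ≤ n) : gg n ((i : ℕ) : ZMod (n+1)) = s n i := by
  have hne : ((i:ℕ) : ZMod (n+1)) ≠ ((0:ℕ) : ZMod (n+1)) :=
    cast_ne n (by omega) (by omega) (by omega)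
  rw [gg, if_neg (by simpa using hne)]

lemma comm_D (p : ℤ) (x : ArtinAffineA n) (hx : Commute x (deltaY n * deltaY n)) :
    Commute x (deltaY n ^ (2 * p)) := by
  have e : deltaY n ^ (2 * p) = (deltaY n * deltaY n) ^ p := by
    rw [zpow_mul, zpow_two]
  rw [e]; exact hx.zpow_right p

lemma comm_delta_sq_v0 (hn : 4 ≤ n) : Commute (vZero n) (deltaY n * deltaY n) := by
  have cw : Commute (deltaY n * deltaY n) (seg n 1 (n-1)) :=
    comm_seg n (by omega) fun k hk1 hk2 => (comm_delta_sq n k hk1 (by omega)).symm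
  have cn : Commute (deltaY n * deltaY n) (s n n) := (comm_delta_sq n n (by omega) le_rfl).symm
  have key : Commute (deltaY n * deltaY n) (vZero n) := by
    rw [v0_eq n]
    exact (cw.mul_right cn).mul_right cw.inv_right
  exact key.symm

lemma comm_gg_D (hn : 4 ≤ n) (p : ℤ) (a : ZMod (n+1)) :
    Commute (deltaY n ^ (2 * p)) (gg n a) := by
  apply Commute.symm
  apply comm_D
  by_cases h : a = 0
  · rw [h, gg_zero]; exact comm_delta_sq_v0 n hn
  · rw [gg, if_neg h]
    have hval : ((ZMod.val a : ℕ) : ZMod (n+1)) = a := ZMod.natCast_zmod_val a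
    have h1 : 1 ≤ a.val := by
      rcases Nat.eq_zero_or_pos a.val with h0 | h0
      · exact absurd (by rw [← hval, h0]; simp) h
      · exact h0
    have h2 : a.val ≤ n := by have := ZMod.val_lt a; omega
    have e : tA n a = s n a.val := congrArg (tA n) hval.symm
    rw [e]; exact comm_delta_sq n a.val h1 h2

lemma braidG (hn : 4 ≤ n) (i : ZMod (n+1)) :
    gg n i * gg n (i+1) * gg n i = gg n (i+1) * gg n i * gg n (i+1) := by
  have hval : ((ZMod.val i : ℕ) : ZMod (n+1)) = i := ZMod.natCast_zmod_val i
  have hlt : i.val ≤ n := by have := ZMod.val_lt i; omega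
  rcases Nat.eq_zero_or_pos i.val with h0 | h1
  · have hi : i = 0 := by rw [← hval, h0]; simp
    subst hi
    rw [show (0 : ZMod (n+1)) + 1 = ((1:ℕ) : ZMod (n+1)) by simp]
    rw [gg_zero, gg_cast n 1 le_rfl (by omega)]
    exact relA n hn
  · rcases Nat.lt_or_ge i.val n with hn' | hn'
    · have egg : gg n i = s n i.val := by
        rw [← gg_cast n i.val h1 hlt, hval]
      have egg2 : gg n (i+1) = s n (i.val+1) := by
        rw [← gg_cast n (i.val+1) (by omega) (by omega), ← cast_add_one, hval]
      rw [egg, egg2]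
      exact braidN n i.val
    · have hiv : i.val = n := by omega
      have e1 : i = ((n : ℕ) : ZMod (n+1)) := by rw [← hval, hiv]
      have e2 : i + 1 = 0 := by
        rw [e1, cast_add_one]
        exact_mod_cast ZMod.natCast_self (n+1)
      rw [e2, e1, gg_zero, gg_cast n n (by omega) le_rfl]
      exact relB n hn

lemma commG (hn : 4 ≤ n) (i j : ZMod (n+1)) (h1 : i ≠ j) (h2 : j ≠ i + 1) (h3 : i ≠ j + 1) :
    gg n i * gg n j = gg n j * gg n i := by
  have hvi : ((ZMod.val i : ℕ) : ZMod (n+1)) = i := ZMod.natCast_zmod_val i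
  have hvj : ((ZMod.val j : ℕ) : ZMod (n+1)) = j := ZMod.natCast_zmod_val j
  have hlti : i.val ≤ n := by have := ZMod.val_lt i; omega
  have hltj : j.val ≤ n := by have := ZMod.val_lt j; omega
  have hij : i.val ≠ j.val := fun e => h1 (by rw [← hvi, ← hvj, e])
  by_cases hi0 : i.val = 0
  · -- i = 0, so 2 ≤ j.val ≤ n-1
    have hi : i = 0 := by rw [← hvi, hi0]; simp
    have hb1 : j.val ≠ 1 := fun e => h2 (by rw [← hvj, e, hi]; simp)
    have hbn : j.val ≠ n := fun e => h3 (by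
      rw [hi, ← hvj, e, cast_add_one]
      exact_mod_cast (ZMod.natCast_self (n+1)).symm)
    rw [hi, ← hvj, gg_zero, gg_cast n j.val (by omega) hltj]
    exact relC n hn j.val (by omega) (by omega)
  · by_cases hj0 : j.val = 0
    · have hj : j = 0 := by rw [← hvj, hj0]; simp
      have ha1 : i.val ≠ 1 := fun e => h3 (by rw [← hvi, e, hj]; simp)
      have han : i.val ≠ n := fun e => h2 (by
        rw [hj, ← hvi, e, cast_add_one]
        exact_mod_cast (ZMod.natCast_self (n+1)).symm)
      rw [hj, ← hvi, gg_zero, gg_cast n i.val (by omega) hlti]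
      exact (relC n hn i.val (by omega) (by omega)).symm
    · -- both at least 1
      have hab : j.val ≠ i.val + 1 := fun e => h2 (by rw [← hvj, e, ← cast_add_one, hvi])
      have hba : i.val ≠ j.val + 1 := fun e => h3 (by rw [← hvi, e, ← cast_add_one, hvj])
      rw [← hvi, ← hvj, gg_cast n i.val (by omega) hlti, gg_cast n j.val (by omega) hltj]
      rcases Nat.lt_or_ge i.val j.val with hlt' | hge
      · exact (commN n i.val j.val (by omega) (by omega) hltj).eq
      · exact ((commN n j.val i.val (by omega) (by omega) hlti).symm).eq

def FF (p : ℤ) (a : ZMod (n+1)) : ArtinAffineA n := gg n a * deltaY n ^ (2 * p)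

lemma shift3 {G : Type*} [Group G] {x y z D : G} (cy : Commute D y) (cz : Commute D z) :
    (x * D) * (y * D) * (z * D) = x * y * z * (D * D * D) := by
  calc (x * D) * (y * D) * (z * D) = x * (D * y) * (D * (z * D)) := by group
    _ = x * (y * D) * (D * (z * D)) := by rw [cy.eq]
    _ = x * y * D * (D * z) * D := by group
    _ = x * y * D * (z * D) * D := by rw [cz.eq]
    _ = x * y * (D * z) * (D * D) := by group
    _ = x * y * (z * D) * (D * D) := by rw [cz.eq]
    _ = x * y * z * (D * D * D) := by group

lemma shift2 {G : Type*} [Group G] {x y D : G} (cy : Commute D y) :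
    (x * D) * (y * D) = x * y * (D * D) := by
  calc (x * D) * (y * D) = x * (D * y) * D := by group
    _ = x * (y * D) * D := by rw [cy.eq]
    _ = x * y * (D * D) := by group

lemma lift_rels (hn : 4 ≤ n) (p : ℤ) :
    ∀ r ∈ ArtinAffineARels n, FreeGroup.lift (FF n p) r = 1 := by
  rintro r ⟨i, j, (⟨hj, rfl⟩ | ⟨h1, h2, h3, rfl⟩)⟩
  · subst hj
    simp only [map_mul, map_inv, FreeGroup.lift_apply_of, mul_inv_eq_one]
    show FF n p i * FF n p (i+1) * FF n p i = FF n p (i+1) * FF n p i * FF n p (i+1)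
    simp only [FF]
    rw [shift3 (comm_gg_D n hn p (i+1)) (comm_gg_D n hn p i),
      shift3 (comm_gg_D n hn p i) (comm_gg_D n hn p (i+1)), braidG n hn i]
  · simp only [map_mul, map_inv, FreeGroup.lift_apply_of, mul_inv_eq_one]
    show FF n p i * FF n p j = FF n p j * FF n p i
    simp only [FF]
    rw [shift2 (comm_gg_D n hn p j), shift2 (comm_gg_D n hn p i), commG n hn i j h1 h2 h3]

end Stmt15

/-- For each `p ∈ ℤ` the assignment `t_i ↦ t_i Δ_Y^{2p}` (`1 ≤ i ≤ n`),
`t₀ ↦ v₀ Δ_Y^{2p}` extends to a well-defined endomorphism `α_p` of `A[Ã n]`. -/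
theorem stmt15 (n : ℕ) (hn : 4 ≤ n) (p : ℤ) :
    ∃ α : ArtinAffineA n →* ArtinAffineA n,
      (∀ i : ℕ, 1 ≤ i → i ≤ n →
        α (tA n (i : ZMod (n + 1))) = tA n (i : ZMod (n + 1)) * deltaY n ^ (2 * p)) ∧
      α (tA n 0) = vZero n * deltaY n ^ (2 * p) := by
  refine ⟨PresentedGroup.toGroup (Stmt15.lift_rels n hn p), ?_, ?_⟩
  · intro i hi1 hi2
    have h := PresentedGroup.toGroup.of (Stmt15.lift_rels n hn p)
      (x := ((i:ℕ) : ZMod (n+1)))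
    refine h.trans ?_
    show Stmt15.gg n _ * _ = _
    rw [Stmt15.gg_cast n i hi1 hi2]
  · have h := PresentedGroup.toGroup.of (Stmt15.lift_rels n hn p) (x := (0 : ZMod (n+1)))
    refine h.trans ?_
    show Stmt15.gg n 0 * _ = _
    rw [Stmt15.gg_zero]
end

section
/- Let n ≥ 4 and let x: A[Ã_n] → Z be the homomorphism sending every generator t_i to 1. Then for the endomorphism α_p of A[Ã_n], one has x(α_p(t_1)) = 1 + p·n(n+1). Consequently, if ψ, ψ' are automorphisms of A[Ã_n] each of which sends every generator to a conjugate of a generator or the inverse of a generator, and ψ ∘ α_p = ψ' ∘ α_q, then p = q. -/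
/-! A homomorphism from `A[Ã n]` to a commutative group is constant on the generators: the braid
relation `a b a = b a b` becomes `a = b` after abelianising, and the Coxeter graph is a cycle.
Since `Δ_Y` is a positive word of length `n(n+1)/2`, such a homomorphism with value `c` on the
generators sends `t₁ Δ_Y^{2p}` to `c (1 + p n(n+1))`. For `x ∘ ψ` the value is `c = ±1`, so
`ψ ∘ α_p = ψ' ∘ α_q` gives `±(1 + p n(n+1)) = ±(1 + q n(n+1))`; as `n(n+1) > 2` the signs
agree and `p = q`. -/

theorem tA_braid (n : ℕ) (i : ZMod (n + 1)) :
    tA n i * tA n (i + 1) * tA n i = tA n (i + 1) * tA n i * tA n (i + 1) := by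
  have h := PresentedGroup.mk_eq_mk_of_mul_inv_mem (rels := ArtinAffineARels n)
    ⟨i, i + 1, .inl ⟨rfl, rfl⟩⟩
  simp only [map_mul] at h
  exact h

theorem MonoidHom.map_eq_of_braid {G M : Type*} [Monoid G] [CancelCommMonoid M] (f : G →* M)
    {a b : G} (h : a * b * a = b * a * b) : f a = f b := by
  have := congrArg f h
  simp only [map_mul] at this
  exact mul_left_cancel (a := f a * f b) (by rw [this, mul_comm (f b) (f a)])

theorem map_tA_eq_map_tA_zero {M : Type*} [CancelCommMonoid M] (n : ℕ)
    (f : ArtinAffineA n →* M) (i : ZMod (n + 1)) : f (tA n i) = f (tA n 0) := by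
  suffices h : ∀ k : ℕ, f (tA n k) = f (tA n 0) by simpa using h i.val
  intro k
  induction k with
  | zero => simp
  | succ k ih => rw [Nat.cast_succ, ← f.map_eq_of_braid (tA_braid n k), ih]

theorem List.prod_map_range_pow_succ_sq {M : Type*} [CommMonoid M] (m : M) (n : ℕ) :
    ((List.range n).map (fun k => m ^ (k + 1))).prod ^ 2 = m ^ (n * (n + 1)) := by
  induction n with
  | zero => simp
  | succ n ih =>
    rw [List.prod_range_succ, mul_pow, ih, ← pow_mul, ← pow_add]
    ring_nf

theorem map_deltaY_sq {M : Type*} [CancelCommMonoid M] (n : ℕ) (f : ArtinAffineA n →* M) :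
    f (deltaY n) ^ 2 = f (tA n 0) ^ (n * (n + 1)) := by
  have hrow : ∀ k, f ((List.range (k + 1)).map (fun i => tA n ((i + 1 : ℕ) : ZMod (n + 1)))).prod
      = f (tA n 0) ^ (k + 1) := by
    intro k
    simp [map_list_prod, Function.comp_def, map_tA_eq_map_tA_zero n f]
  rw [deltaY, map_list_prod, List.map_map]
  simp only [Function.comp_def, hrow, List.map_reverse, List.prod_reverse]
  exact List.prod_map_range_pow_succ_sq _ n

theorem map_tA_mul_deltaY_zpow {M : Type*} [CommGroup M] (n : ℕ) (f : ArtinAffineA n →* M)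
    (i : ZMod (n + 1)) (p : ℤ) :
    f (tA n i * deltaY n ^ (2 * p)) = f (tA n 0) ^ (1 + p * n * (n + 1)) := by
  rw [map_mul, map_zpow, zpow_mul, zpow_two, ← pow_two, map_deltaY_sq, map_tA_eq_map_tA_zero,
    ← zpow_natCast, ← zpow_mul, zpow_one_add]
  push_cast
  ring_nf

theorem Int.eq_of_one_add_mul_mul_sign_eq {N p q ε ε' : ℤ} (hN : 2 < N)
    (hε : ε = 1 ∨ ε = -1) (hε' : ε' = 1 ∨ ε' = -1) (h : (1 + p * N) * ε = (1 + q * N) * ε') :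
    p = q := by
  have hN0 : N ≠ 0 := by omega
  have not_dvd_two : ¬ N ∣ 2 := fun hdvd => by linarith [Int.le_of_dvd two_pos hdvd]
  rcases hε with rfl | rfl <;> rcases hε' with rfl | rfl
  · exact mul_right_cancel₀ hN0 (by linarith)
  · exact absurd ⟨-(p + q), by linarith⟩ not_dvd_two
  · exact absurd ⟨-(p + q), by linarith⟩ not_dvd_two
  · exact mul_right_cancel₀ hN0 (by linarith)

theorem stmt16_general (n : ℕ) (hn : 4 ≤ n)
    (x : ArtinAffineA n →* Multiplicative ℤ)
    (hx : ∀ i : ZMod (n + 1), x (tA n i) = Multiplicative.ofAdd 1)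
    (p q : ℤ) (α β : ArtinAffineA n →* ArtinAffineA n)
    (hα₁ : ∀ i : ℕ, 1 ≤ i → i ≤ n →
      α (tA n (i : ZMod (n + 1))) = tA n (i : ZMod (n + 1)) * deltaY n ^ (2 * p))
    (hβ₁ : ∀ i : ℕ, 1 ≤ i → i ≤ n →
      β (tA n (i : ZMod (n + 1))) = tA n (i : ZMod (n + 1)) * deltaY n ^ (2 * q)) :
    x (α (tA n ((1 : ℕ) : ZMod (n + 1)))) =
      Multiplicative.ofAdd (1 + p * (n : ℤ) * ((n : ℤ) + 1)) ∧
    (∀ ψ ψ' : MulAut (ArtinAffineA n),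
      (∀ i : ZMod (n + 1), ∃ (g : ArtinAffineA n) (j : ZMod (n + 1)) (ε : ℤ),
        (ε = 1 ∨ ε = -1) ∧ ψ (tA n i) = g * tA n j ^ ε * g⁻¹) →
      (∀ i : ZMod (n + 1), ∃ (g : ArtinAffineA n) (j : ZMod (n + 1)) (ε : ℤ),
        (ε = 1 ∨ ε = -1) ∧ ψ' (tA n i) = g * tA n j ^ ε * g⁻¹) →
      (∀ a : ArtinAffineA n, ψ (α a) = ψ' (β a)) → p = q) := by
  have hαt₁ := hα₁ 1 le_rfl (by omega)
  have hβt₁ := hβ₁ 1 le_rfl (by omega)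
  refine ⟨by rw [hαt₁, map_tA_mul_deltaY_zpow, hx, ← ofAdd_zsmul, smul_eq_mul, mul_one], ?_⟩
  intro ψ ψ' hψ hψ' hcomm
  obtain ⟨g, j, ε, hε, hψt₀⟩ := hψ 0
  obtain ⟨g', j', ε', hε', hψ't₀⟩ := hψ' 0
  have h := congrArg x (hcomm (tA n ((1 : ℕ) : ZMod (n + 1))))
  rw [hαt₁, hβt₁] at h
  change (x.comp ψ.toMonoidHom) _ = (x.comp ψ'.toMonoidHom) _ at h
  rw [map_tA_mul_deltaY_zpow, map_tA_mul_deltaY_zpow] at h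
  simp only [MonoidHom.comp_apply, MulEquiv.coe_toMonoidHom, hψt₀, hψ't₀, map_mul, map_inv,
    map_zpow, mul_inv_cancel_comm, hx] at h
  have hN : (2 : ℤ) < n * (n + 1) := by nlinarith [(by exact_mod_cast hn : (4 : ℤ) ≤ n)]
  have h' := congrArg Multiplicative.toAdd h
  simp only [Int.toAdd_zpow, toAdd_ofAdd] at h'
  exact Int.eq_of_one_add_mul_mul_sign_eq hN hε hε' (by linear_combination h')

/-- If `x : A[Ã n] → ℤ` sends every generator to `1`, then
`x (α_p t₁) = 1 + p·n(n+1)`; consequently if `ψ, ψ'` are automorphisms each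
sending every generator to a conjugate of a generator or of an inverse of a
generator, and `ψ ∘ α_p = ψ' ∘ α_q`, then `p = q`. -/
theorem stmt16 (n : ℕ) (hn : 4 ≤ n)
    (x : ArtinAffineA n →* Multiplicative ℤ)
    (hx : ∀ i : ZMod (n + 1), x (tA n i) = Multiplicative.ofAdd 1)
    (p q : ℤ) (α β : ArtinAffineA n →* ArtinAffineA n)
    (hα₁ : ∀ i : ℕ, 1 ≤ i → i ≤ n →
      α (tA n (i : ZMod (n + 1))) = tA n (i : ZMod (n + 1)) * deltaY n ^ (2 * p))
    (hα₀ : α (tA n 0) = vZero n * deltaY n ^ (2 * p))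
    (hβ₁ : ∀ i : ℕ, 1 ≤ i → i ≤ n →
      β (tA n (i : ZMod (n + 1))) = tA n (i : ZMod (n + 1)) * deltaY n ^ (2 * q))
    (hβ₀ : β (tA n 0) = vZero n * deltaY n ^ (2 * q)) :
    x (α (tA n ((1 : ℕ) : ZMod (n + 1)))) =
      Multiplicative.ofAdd (1 + p * (n : ℤ) * ((n : ℤ) + 1)) ∧
    (∀ ψ ψ' : MulAut (ArtinAffineA n),
      (∀ i : ZMod (n + 1), ∃ (g : ArtinAffineA n) (j : ZMod (n + 1)) (ε : ℤ),
        (ε = 1 ∨ ε = -1) ∧ ψ (tA n i) = g * tA n j ^ ε * g⁻¹) →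
      (∀ i : ZMod (n + 1), ∃ (g : ArtinAffineA n) (j : ZMod (n + 1)) (ε : ℤ),
        (ε = 1 ∨ ε = -1) ∧ ψ' (tA n i) = g * tA n j ^ ε * g⁻¹) →
      (∀ a : ArtinAffineA n, ψ (α a) = ψ' (β a)) → p = q) :=
  stmt16_general n hn x hx p q α β hα₁ hβ₁
end
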